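/- arXiv:2307.07679 — 9 statements merged into one kernel-verified Lean document; each statement's English description precedes it below -/
import Mathlib

section
/- Let $0<\beta<1/2$, $q_n = \sqrt{n^{-1+2\beta} - (n+1)^{-1+2\beta}}$, and $\gamma_n = q_n^{-1} - q_{n-1}^{-1}$. Then $\gamma_n \cdot n^{\beta} \to (1-\beta)/\sqrt{1-2\beta}$ as $n \to \infty$. -/
open Filter Real Topology

lemma aux_slope (s : ℝ) :
    Tendsto (fun x : ℝ => x * (1 - (1 + x⁻¹) ^ (-s))) atTop (𝓝 s) := by
  have hd : HasDerivAt (fun t : ℝ => (1 + t) ^ (-s)) (-s) 0 := by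
    have h1 : HasDerivAt (fun t : ℝ => 1 + t) 1 0 := (hasDerivAt_id 0).const_add 1
    have := h1.rpow_const (p := -s) (by norm_num)
    simpa using this
  have hslope := hasDerivAt_iff_tendsto_slope.mp hd
  have hneg : Tendsto (fun t : ℝ => -slope (fun t : ℝ => (1 + t) ^ (-s)) 0 t) (𝓝[≠] 0) (𝓝 s) := by
    simpa using hslope.neg
  have hcomp := hneg.comp (tendsto_inv_atTop_nhdsGT_zero.mono_right
    (nhdsWithin_mono _ (fun x hx => ne_of_gt hx)))
  refine hcomp.congr' ?_
  filter_upwards [eventually_gt_atTop (0:ℝ)] with x hx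
  have hx0 : x ≠ 0 := ne_of_gt hx
  simp only [Function.comp, slope_def_field]
  field_simp
  rw [add_zero, Real.one_rpow]
  ring

theorem stmt_1 (β : ℝ) (hβ0 : 0 < β) (hβ2 : β < 1/2)
    (q γ : ℕ → ℝ)
    (hq : ∀ n : ℕ, 1 ≤ n →
      q n = Real.sqrt ((n : ℝ) ^ (-1 + 2*β) - ((n : ℝ) + 1) ^ (-1 + 2*β)))
    (hγ : ∀ n : ℕ, 2 ≤ n → γ n = (q n)⁻¹ - (q (n-1))⁻¹) :
    Tendsto (fun n : ℕ => γ n * (n : ℝ) ^ β)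
      atTop (nhds ((1 - β) / Real.sqrt (1 - 2*β))) := by
  set α : ℝ := 1 - 2*β with hαdef
  have hα0 : 0 < α := by rw [hαdef]; linarith
  have hsq : 0 < Real.sqrt α := Real.sqrt_pos.mpr hα0
  set A : ℝ → ℝ := fun x => x ^ (-α) - (x + 1) ^ (-α) with hA
  set A' : ℝ → ℝ := fun x => -α * x ^ (-(α+1)) + α * (x + 1) ^ (-(α+1)) with hA'
  set g : ℝ → ℝ := fun x => A x ^ (-(3/2 : ℝ) + 1) with hg
  set G : ℝ → ℝ := fun x => (-(1/2) : ℝ) * A x ^ (-(3/2) : ℝ) * A' x with hG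
  set B : ℝ → ℝ := fun x => x * (1 - (1 + x⁻¹) ^ (-(α+1))) with hB
  set C : ℝ → ℝ := fun x => x * (1 - (1 + x⁻¹) ^ (-α)) with hC
  have hApos : ∀ x : ℝ, 0 < x → 0 < A x := by
    intro x hx
    have := Real.rpow_lt_rpow_of_neg hx (by linarith : x < x + 1) (by linarith : -α < 0)
    simp only [hA]
    linarith
  have hderiv : ∀ x : ℝ, 0 < x → HasDerivAt g (G x) x := by
    intro x hx
    have hdA : HasDerivAt A (A' x) x := by
      have h1 : HasDerivAt (fun y : ℝ => y ^ (-α)) (-α * x ^ (-α - 1)) x :=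
        Real.hasDerivAt_rpow_const (Or.inl hx.ne')
      have h2 : HasDerivAt (fun y : ℝ => (y + 1) ^ (-α)) (-α * (x + 1) ^ (-α - 1)) x := by
        have hb : HasDerivAt (fun y : ℝ => y + 1) 1 x := (hasDerivAt_id x).add_const 1
        have := hb.rpow_const (p := -α) (Or.inl (by positivity))
        simpa using this
      have h3 := h1.sub h2
      simp only [hA, hA']
      refine h3.congr_deriv ?_
      rw [show -α - 1 = -(α+1) by ring]
      ring
    have h4 := hdA.rpow_const (p := (-(3/2 : ℝ) + 1)) (Or.inl (hApos x hx).ne')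
    simp only [hg, hG]
    convert h4 using 1
    rw [show (-(3/2 : ℝ) + 1) - 1 = -(3/2 : ℝ) by ring]
    ring
  have hkey : ∀ x : ℝ, 1 ≤ x → G x * x ^ β = α/2 * B x * C x ^ (-(3/2) : ℝ) := by
    intro x hx
    have hxpos : (0:ℝ) < x := lt_of_lt_of_le one_pos hx
    have hx1 : (1:ℝ) < 1 + x⁻¹ := by
      have : (0:ℝ) < x⁻¹ := by positivity
      linarith
    have hCpos : 0 < C x := by
      have := Real.rpow_lt_one_of_one_lt_of_neg hx1 (by linarith : -α < 0)
      simp only [hC]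
      exact mul_pos hxpos (by linarith)
    have hsplit : ∀ s : ℝ, (x + 1) ^ (-s) = x ^ (-s) * (1 + x⁻¹) ^ (-s) := by
      intro s
      rw [show x + 1 = x * (1 + x⁻¹) by field_simp,
        Real.mul_rpow hxpos.le (by positivity)]
    have hpow : ∀ s : ℝ, x ^ (-(s+1)) * x = x ^ (-s) := by
      intro s
      nth_rewrite 2 [show x = x ^ (1:ℝ) by rw [Real.rpow_one]]
      rw [← Real.rpow_add hxpos]
      norm_num
    have hAeq : A x = x ^ (-(α+1)) * C x := by
      simp only [hA, hC]
      rw [hsplit α]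
      linear_combination ((1 + x⁻¹) ^ (-α) - 1) * hpow α
    have hA'eq : A' x = -α * x ^ (-(α+2)) * B x := by
      simp only [hA', hB]
      rw [hsplit (α+1)]
      have h5 : x ^ (-(α+2)) * x = x ^ (-(α+1)) := by
        rw [show -(α+2) = -((α+1)+1) by ring, hpow (α+1)]
      linear_combination α * (1 - (1 + x⁻¹) ^ (-(α+1))) * h5
    have hApow : A x ^ (-(3/2) : ℝ) = x ^ ((α+1)*(3/2)) * C x ^ (-(3/2) : ℝ) := by
      rw [hAeq, Real.mul_rpow (by positivity) hCpos.le, ← Real.rpow_mul hxpos.le]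
      rw [show -(α+1) * (-(3/2) : ℝ) = (α+1)*(3/2) by ring]
    have hxcomb : x ^ ((α+1)*(3/2)) * x ^ (-(α+2)) * x ^ β = 1 := by
      rw [← Real.rpow_add hxpos, ← Real.rpow_add hxpos,
        show (α+1)*(3/2) + (-(α+2)) + β = 0 by rw [hαdef]; ring, Real.rpow_zero]
    calc G x * x ^ β
        = (-(1/2) : ℝ) * (x ^ ((α+1)*(3/2)) * C x ^ (-(3/2) : ℝ)) *
            (-α * x ^ (-(α+2)) * B x) * x ^ β := by
          simp only [hG]; rw [hApow, hA'eq]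
      _ = α/2 * B x * C x ^ (-(3/2) : ℝ) *
            (x ^ ((α+1)*(3/2)) * x ^ (-(α+2)) * x ^ β) := by ring
      _ = α/2 * B x * C x ^ (-(3/2) : ℝ) := by rw [hxcomb, mul_one]
  have hBlim : Tendsto B atTop (𝓝 (α+1)) := aux_slope (α+1)
  have hClim : Tendsto C atTop (𝓝 α) := aux_slope α
  have hCpowlim : Tendsto (fun x => C x ^ (-(3/2) : ℝ)) atTop (𝓝 (α ^ (-(3/2) : ℝ))) :=
    ((Real.continuousAt_rpow_const α _ (Or.inl hα0.ne')).tendsto).comp hClim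
  have hL : α/2 * (α+1) * α ^ (-(3/2) : ℝ) = (1 - β) / Real.sqrt α := by
    have h32 : α ^ (-(3/2) : ℝ) = (α * Real.sqrt α)⁻¹ := by
      rw [Real.rpow_neg hα0.le, show (3/2 : ℝ) = 1 + 1/2 by norm_num,
        Real.rpow_add hα0, Real.rpow_one, ← Real.sqrt_eq_rpow]
    rw [h32, show 1 - β = (α+1)/2 by rw [hαdef]; ring]
    field_simp
  have hF : Tendsto (fun x => G x * x ^ β) atTop (𝓝 ((1 - β) / Real.sqrt α)) := by
    rw [← hL]
    refine (((tendsto_const_nhds.mul hBlim).mul hCpowlim)).congr' ?_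
    filter_upwards [eventually_ge_atTop (1:ℝ)] with x hx
    exact (hkey x hx).symm
  have hgq : ∀ n : ℕ, 1 ≤ n → (q n)⁻¹ = g n := by
    intro n hn
    have hn0 : (0:ℝ) < n := by exact_mod_cast hn
    have hAn : (0:ℝ) < (n:ℝ) ^ (-α) - ((n:ℝ) + 1) ^ (-α) := by
      have := hApos n hn0
      simpa [hA] using this
    rw [hq n hn, show (-1 + 2*β) = -α by rw [hαdef]; ring]
    simp only [hg, hA]
    rw [show (-(3/2 : ℝ) + 1) = -(1/2 : ℝ) by norm_num,
      show (-(1/2 : ℝ)) = -(1/2 : ℝ) from rfl]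
    rw [Real.rpow_neg hAn.le, Real.sqrt_eq_rpow]
  have hmvt : ∀ n : ℕ, 2 ≤ n → ∃ c, ((n:ℝ)-1 < c ∧ c < n) ∧ G c = γ n := by
    intro n hn
    have h2 : (2:ℝ) ≤ n := by exact_mod_cast hn
    have h1 : (1:ℝ) ≤ (n:ℝ) - 1 := by linarith
    have hab : (n:ℝ) - 1 < n := by linarith
    obtain ⟨c, hc, hceq⟩ := exists_hasDerivAt_eq_slope g G hab
      (fun x hx => ((hderiv x (by have := hx.1; linarith)).continuousAt).continuousWithinAt)
      (fun x hx => hderiv x (by have := hx.1; linarith))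
    refine ⟨c, ⟨hc.1, hc.2⟩, ?_⟩
    rw [hceq, show (n:ℝ) - ((n:ℝ)-1) = 1 by ring, div_one]
    have hcast : ((n - 1 : ℕ) : ℝ) = (n:ℝ) - 1 := by
      rw [Nat.cast_sub (by omega : 1 ≤ n), Nat.cast_one]
    rw [hγ n hn, hgq n (by omega), hgq (n-1) (by omega), hcast]
  have hmvt' : ∀ n : ℕ, ∃ c : ℝ, 2 ≤ n → ((n:ℝ)-1 < c ∧ c < n) ∧ G c = γ n := by
    intro n
    by_cases h : 2 ≤ n
    · obtain ⟨c, hc⟩ := hmvt n h; exact ⟨c, fun _ => hc⟩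
    · exact ⟨0, fun hh => absurd hh h⟩
  choose ξ hξ using hmvt'
  have hξtop : Tendsto ξ atTop atTop := by
    refine tendsto_atTop_mono' atTop ?_
      (show Tendsto (fun n : ℕ => (n:ℝ) - 1) atTop atTop by
        simpa [sub_eq_add_neg] using
          tendsto_atTop_add_const_right atTop (-1 : ℝ) tendsto_natCast_atTop_atTop)
    filter_upwards [eventually_ge_atTop 2] with n hn
    exact ((hξ n hn).1.1).le
  have hupper : Tendsto (fun n : ℕ => (n:ℝ) / ((n:ℝ) - 1)) atTop (𝓝 1) := by
    have h1 : Tendsto (fun n : ℕ => (n:ℝ) - 1) atTop atTop := by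
      simpa [sub_eq_add_neg] using
        tendsto_atTop_add_const_right atTop (-1 : ℝ) tendsto_natCast_atTop_atTop
    have h3 : Tendsto (fun n : ℕ => 1 + ((n:ℝ) - 1)⁻¹) atTop (𝓝 (1 + 0)) :=
      tendsto_const_nhds.add (tendsto_inv_atTop_zero.comp h1)
    rw [add_zero] at h3
    refine h3.congr' ?_
    filter_upwards [eventually_ge_atTop 2] with n hn
    have h2' : (2:ℝ) ≤ n := by exact_mod_cast hn
    have hne : (n:ℝ) - 1 ≠ 0 := ne_of_gt (by linarith)
    field_simp
    ring
  have hratio : Tendsto (fun n : ℕ => (n:ℝ) / ξ n) atTop (𝓝 1) := by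
    refine tendsto_of_tendsto_of_tendsto_of_le_of_le' tendsto_const_nhds hupper ?_ ?_
    · filter_upwards [eventually_ge_atTop 2] with n hn
      have h2 : (2:ℝ) ≤ n := by exact_mod_cast hn
      obtain ⟨⟨hl, hu⟩, -⟩ := hξ n hn
      have hcpos : (0:ℝ) < ξ n := by linarith
      rw [one_le_div hcpos]
      linarith
    · filter_upwards [eventually_ge_atTop 2] with n hn
      have h2 : (2:ℝ) ≤ n := by exact_mod_cast hn
      obtain ⟨⟨hl, hu⟩, -⟩ := hξ n hn
      have hcpos : (0:ℝ) < ξ n := by linarith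
      have h1p : (0:ℝ) < (n:ℝ) - 1 := by linarith
      rw [div_le_div_iff₀ hcpos h1p]
      nlinarith
  have hone : Tendsto (fun n : ℕ => ((n:ℝ) / ξ n) ^ β) atTop (𝓝 1) := by
    have hc := (Real.continuousAt_rpow_const 1 β (Or.inl one_ne_zero)).tendsto
    have := hc.comp hratio
    simpa [Real.one_rpow, Function.comp_def] using this
  have hmain := (hF.comp hξtop).mul hone
  rw [mul_one] at hmain
  refine hmain.congr' ?_
  filter_upwards [eventually_ge_atTop 2] with n hn
  have h2 : (2:ℝ) ≤ n := by exact_mod_cast hn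
  obtain ⟨⟨hl, hu⟩, hGc⟩ := hξ n hn
  have hcpos : (0:ℝ) < ξ n := by linarith
  have hnpos : (0:ℝ) < n := by linarith
  have hcb : (0:ℝ) < ξ n ^ β := Real.rpow_pos_of_pos hcpos β
  simp only [Function.comp_apply]
  rw [Real.div_rpow hnpos.le hcpos.le, ← hGc]
  field_simp
end

section
/- Let $0<\beta<1/2$, $q_n = \sqrt{n^{-1+2\beta} - (n+1)^{-1+2\beta}}$, and $\gamma_n = q_n^{-1} - q_{n-1}^{-1}$. Then $n^{1-\beta}\,(q_n - \gamma_n n^{-1+2\beta}) \to -\beta/\sqrt{1-2\beta}$ as $n \to \infty$. -/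
open Filter Real Topology

lemma lem_slope (c s : ℝ) :
    Tendsto (fun x : ℝ => ((1 + c * x) ^ s - 1) / x) (𝓝[>] (0:ℝ)) (𝓝 (s * c)) := by
  have h1 : HasDerivAt (fun x : ℝ => 1 + c * x) c 0 := by
    simpa using ((hasDerivAt_id (0:ℝ)).const_mul c).const_add 1
  have h2 : HasDerivAt (fun y : ℝ => y ^ s) (s * (1:ℝ) ^ (s - 1)) (1 + c * 0) := by
    have := Real.hasDerivAt_rpow_const (x := (1:ℝ)) (p := s) (Or.inl one_ne_zero)
    simpa using this
  have h : HasDerivAt (fun x : ℝ => (1 + c * x) ^ s) (s * c) 0 := by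
    have := h2.comp 0 h1
    simpa [Function.comp_def] using this
  have := hasDerivAt_iff_tendsto_slope.mp h
  have h3 : Tendsto (slope (fun x : ℝ => (1 + c * x) ^ s) 0) (𝓝[>] (0:ℝ)) (𝓝 (s*c)) :=
    this.mono_left (nhdsWithin_mono _ (fun x hx => ne_of_gt hx))
  refine h3.congr (fun x => ?_)
  simp [slope_def_field, div_eq_div_iff]


lemma lem_invnat : Tendsto (fun n : ℕ => ((n:ℝ))⁻¹) atTop (𝓝[>] (0:ℝ)) := by
  refine tendsto_nhdsWithin_of_tendsto_nhds_of_eventually_within _ ?_ ?_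
  · simpa [one_div] using tendsto_one_div_atTop_nhds_zero_nat (𝕜 := ℝ)
  · filter_upwards [eventually_ge_atTop 1] with n hn
    have : (0:ℝ) < n := by exact_mod_cast hn
    exact inv_pos.mpr this

lemma lem_lhop (a : ℝ) (ha : 0 < a) :
    Tendsto (fun x : ℝ => (1 - (1 + x) ^ (-a) - a * x) / x ^ 2) (𝓝[>] (0:ℝ))
      (𝓝 (-(a * (a + 1)) / 2)) := by
  have key : ∀ x : ℝ, 0 < x → HasDerivAt (fun y : ℝ => 1 - (1 + y) ^ (-a) - a * y)
      (a * (1 + x) ^ (-a - 1) - a) x := by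
    intro x hx
    have h1 : HasDerivAt (fun y : ℝ => 1 + y) 1 x := by
      simpa using (hasDerivAt_id x).const_add 1
    have h2 : HasDerivAt (fun y : ℝ => y ^ (-a)) (-a * (1 + x) ^ (-a - 1)) (1 + x) :=
      Real.hasDerivAt_rpow_const (Or.inl (by linarith))
    have h3 : HasDerivAt (fun y : ℝ => (1 + y) ^ (-a)) (-a * (1 + x) ^ (-a - 1)) x := by
      simpa [Function.comp_def] using h2.comp x h1
    have h4 := ((hasDerivAt_const x (1:ℝ)).sub h3).sub ((hasDerivAt_id x).const_mul a)
    refine HasDerivAt.congr_deriv h4 ?_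
    ring
  apply HasDerivAt.lhopital_zero_nhdsGT
    (f' := fun x => a * (1 + x) ^ (-a - 1) - a) (g' := fun x => 2 * x)
  · filter_upwards [self_mem_nhdsWithin] with x hx
    exact key x hx
  · filter_upwards with x
    simpa [Pi.pow_def] using ((hasDerivAt_id x).pow 2)
  · filter_upwards [self_mem_nhdsWithin] with x hx
    exact mul_ne_zero two_ne_zero (ne_of_gt hx)
  · have h1 : HasDerivAt (fun y : ℝ => 1 + y) 1 0 := by
      simpa using (hasDerivAt_id (0:ℝ)).const_add 1
    have h2 : HasDerivAt (fun y : ℝ => y ^ (-a)) (-a * (1:ℝ) ^ (-a - 1)) (1 + 0:ℝ) := by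
      simpa using Real.hasDerivAt_rpow_const (x := (1:ℝ)) (p := -a) (Or.inl one_ne_zero)
    have h0 := ((hasDerivAt_const 0 (1:ℝ)).sub (h2.comp 0 h1)).sub ((hasDerivAt_id 0).const_mul a)
    have := h0.continuousAt.continuousWithinAt (s := Set.Ioi 0)
    have h5 : (fun y : ℝ => 1 - (1 + y) ^ (-a) - a * y) 0 = 0 := by simp
    simpa [h5, Function.comp_def, Pi.sub_def] using this.tendsto
  · have : Tendsto (fun x : ℝ => x ^ 2) (𝓝 (0:ℝ)) (𝓝 0) := by
      simpa using (continuous_pow 2).tendsto (0:ℝ)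
    exact this.mono_left nhdsWithin_le_nhds
  · have h6 : Tendsto (fun x : ℝ => (a/2) * (((1 + 1 * x) ^ (-a-1) - 1) / x))
        (𝓝[>] (0:ℝ)) (𝓝 ((a/2) * ((-a-1) * 1))) := (lem_slope 1 (-a-1)).const_mul (a/2)
    refine Tendsto.congr' ?_ (by convert h6 using 2; ring)
    filter_upwards [self_mem_nhdsWithin] with x hx
    have hx' : (x:ℝ) ≠ 0 := ne_of_gt hx
    field_simp

lemma rpow_sum3 {x : ℝ} (hx : 0 < x) (a b : ℝ) : x ^ a * x ^ b = x ^ (a+b) :=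
  (Real.rpow_add hx a b).symm

lemma rpow_one_add {x : ℝ} (hx : 0 < x) (a : ℝ) : x * x ^ a = x ^ (1+a) := by
  rw [Real.rpow_add hx, Real.rpow_one]

lemma inv_sqrt_sub (a b : ℝ) (ha : 0 < a) (hb : 0 < b) :
    (Real.sqrt a)⁻¹ - (Real.sqrt b)⁻¹
      = (b - a) * (Real.sqrt a * Real.sqrt b * (Real.sqrt a + Real.sqrt b))⁻¹ := by
  have sa : 0 < Real.sqrt a := Real.sqrt_pos.mpr ha
  have sb : 0 < Real.sqrt b := Real.sqrt_pos.mpr hb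
  have ha' : Real.sqrt a ^ 2 = a := Real.sq_sqrt ha.le
  have hb' : Real.sqrt b ^ 2 = b := Real.sq_sqrt hb.le
  field_simp
  linear_combination hb' - ha'

lemma key_q (β : ℝ) (hβ0 : 0 < β) (hβ2 : β < 1/2) (k : ℕ) (hk : 1 ≤ k) :
    Real.sqrt ((k:ℝ) ^ (-1 + 2*β) - ((k:ℝ) + 1) ^ (-1 + 2*β))
      = (k:ℝ) ^ (β - 1) * Real.sqrt ((k:ℝ) * (1 - (1 + ((k:ℝ))⁻¹) ^ (-(1 - 2*β)))) := by
  have hK : (0:ℝ) < k := by exact_mod_cast hk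
  have hKne : ((k:ℝ)) ≠ 0 := ne_of_gt hK
  have e1 : (-1 + 2*β) = 2*β - 1 := by ring
  have e1' : (-(1 - 2*β)) = 2*β - 1 := by ring
  rw [e1, e1']
  have h2 : (1 + ((k:ℝ))⁻¹) = ((k:ℝ) + 1)/(k:ℝ) := by field_simp
  rw [h2, Real.div_rpow (by linarith) hK.le]
  have h4 : ((k:ℝ)) ^ (2*β - 1) ≠ 0 := (Real.rpow_pos_of_pos hK _).ne'
  have e2 : ((k:ℝ) ^ (β - 1)) ^ 2 * (k:ℝ) = (k:ℝ) ^ (2*β - 1) := by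
    rw [sq, rpow_sum3 hK, mul_comm, rpow_one_add hK]
    congr 1
    ring
  have inner : ((k:ℝ) ^ (β - 1)) ^ 2
        * ((k:ℝ) * (1 - ((k:ℝ) + 1) ^ (2*β - 1) / (k:ℝ) ^ (2*β - 1)))
      = (k:ℝ) ^ (2*β - 1) - ((k:ℝ) + 1) ^ (2*β - 1) := by
    calc ((k:ℝ) ^ (β - 1)) ^ 2 * ((k:ℝ) * (1 - ((k:ℝ) + 1) ^ (2*β-1) / (k:ℝ) ^ (2*β-1)))
        = (((k:ℝ) ^ (β - 1)) ^ 2 * (k:ℝ)) * (1 - ((k:ℝ) + 1) ^ (2*β-1) / (k:ℝ) ^ (2*β-1)) := by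
          ring
      _ = (k:ℝ) ^ (2*β-1) * (1 - ((k:ℝ) + 1) ^ (2*β-1) / (k:ℝ) ^ (2*β-1)) := by rw [e2]
      _ = (k:ℝ) ^ (2*β-1) - ((k:ℝ) + 1) ^ (2*β-1) := by field_simp
  rw [← inner, Real.sqrt_mul (sq_nonneg _), Real.sqrt_sq (Real.rpow_nonneg hK.le _)]

theorem stmt_2 (β : ℝ) (hβ0 : 0 < β) (hβ2 : β < 1/2)
    (q γ : ℕ → ℝ)
    (hq : ∀ n : ℕ, 1 ≤ n →
      q n = Real.sqrt ((n : ℝ) ^ (-1 + 2*β) - ((n : ℝ) + 1) ^ (-1 + 2*β)))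
    (hγ : ∀ n : ℕ, 2 ≤ n → γ n = (q n)⁻¹ - (q (n-1))⁻¹) :
    Tendsto (fun n : ℕ => (n : ℝ) ^ (1 - β) * (q n - γ n * (n : ℝ) ^ (-1 + 2*β)))
      atTop (nhds (-β / Real.sqrt (1 - 2*β))) := by
  have hα : (0:ℝ) < 1 - 2*β := by linarith
  set g : ℕ → ℝ := fun n => (n:ℝ) * (1 - (1 + ((n:ℝ))⁻¹) ^ (-(1 - 2*β))) with hgdef
  have hsa : 0 < Real.sqrt (1 - 2*β) := Real.sqrt_pos.mpr hα
  -- positivity of g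
  have gpos : ∀ n : ℕ, 1 ≤ n → 0 < g n := by
    intro n hn
    have hn' : (0:ℝ) < n := by exact_mod_cast hn
    have h1 : (1:ℝ) < 1 + ((n:ℝ))⁻¹ := lt_add_of_pos_right 1 (inv_pos.mpr hn')
    have h2 : (1 + ((n:ℝ))⁻¹) ^ (-(1 - 2*β)) < 1 :=
      Real.rpow_lt_one_of_one_lt_of_neg h1 (by linarith)
    exact mul_pos hn' (by linarith)
  -- limit of g
  have L_g : Tendsto g atTop (𝓝 (1 - 2*β)) := by
    have h0 := (((lem_slope 1 (-(1 - 2*β))).neg).comp lem_invnat)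
    have h1 : Tendsto g atTop (𝓝 (-(-(1 - 2*β) * 1))) := by
      refine h0.congr' ?_
      filter_upwards [eventually_ge_atTop 1] with n hn
      have hn' : ((n:ℝ)) ≠ 0 := Nat.cast_ne_zero.mpr (by omega)
      show -(((1 + 1 * ((n:ℝ))⁻¹) ^ (-(1 - 2*β)) - 1) / ((n:ℝ))⁻¹) = g n
      simp only [hgdef, one_mul]
      rw [div_eq_mul_inv, inv_inv]
      ring
    simpa using h1
  have L_g1 : Tendsto (fun n => g (n-1)) atTop (𝓝 (1 - 2*β)) :=
    L_g.comp (tendsto_sub_atTop_nat 1)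
  -- second-order limit
  have Lδ : Tendsto (fun n : ℕ => (n:ℝ) * (g n - (1 - 2*β))) atTop
      (𝓝 (-((1 - 2*β) * ((1 - 2*β) + 1))/2)) := by
    have h0 := (lem_lhop (1 - 2*β) hα).comp lem_invnat
    refine h0.congr' ?_
    filter_upwards [eventually_ge_atTop 1] with n hn
    have hn' : ((n:ℝ)) ≠ 0 := Nat.cast_ne_zero.mpr (by omega)
    show (1 - (1 + ((n:ℝ))⁻¹) ^ (-(1 - 2*β)) - (1 - 2*β) * ((n:ℝ))⁻¹) / (((n:ℝ))⁻¹) ^ 2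
        = (n:ℝ) * (g n - (1 - 2*β))
    rw [hgdef]
    field_simp
  have ratio : Tendsto (fun n : ℕ => (n:ℝ)/((n:ℝ) - 1)) atTop (𝓝 1) := by
    have h1 : Tendsto (fun n : ℕ => (n:ℝ) - 1) atTop atTop := by
      simpa [sub_eq_add_neg] using tendsto_atTop_add_const_right atTop (-1:ℝ) tendsto_natCast_atTop_atTop
    have h2 := h1.inv_tendsto_atTop
    have h3 := tendsto_const_nhds.add h2 (f := fun _ : ℕ => (1:ℝ))
    have h4 : Tendsto (fun n : ℕ => (n:ℝ)/((n:ℝ) - 1)) atTop (𝓝 (1 + 0)) := by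
      refine h3.congr' ?_
      filter_upwards [eventually_ge_atTop 2] with n hn
      have hn2 : (2:ℝ) ≤ (n:ℝ) := by exact_mod_cast hn
      have hne : (n:ℝ) - 1 ≠ 0 := by linarith
      simp only [Pi.inv_apply]
      field_simp
      ring
    simpa using h4
  have Lδ1 : Tendsto (fun n : ℕ => (n:ℝ) * (g (n-1) - (1 - 2*β))) atTop
      (𝓝 (-((1 - 2*β) * ((1 - 2*β) + 1))/2)) := by
    have h0 := Lδ.comp (tendsto_sub_atTop_nat 1)
    have h1 := ratio.mul h0
    have h2 : Tendsto (fun n : ℕ => (n:ℝ) * (g (n-1) - (1 - 2*β))) atTop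
        (𝓝 (1 * (-((1 - 2*β) * ((1 - 2*β) + 1))/2))) := by
      refine h1.congr' ?_
      filter_upwards [eventually_ge_atTop 2] with n hn
      have hcast : (((n-1:ℕ)):ℝ) = (n:ℝ) - 1 := by
        rw [Nat.cast_sub (by omega), Nat.cast_one]
      have hn2 : (2:ℝ) ≤ (n:ℝ) := by exact_mod_cast hn
      have hne : (n:ℝ) - 1 ≠ 0 := by linarith
      show (n:ℝ)/((n:ℝ)-1) * ((((n-1:ℕ)):ℝ) * (g (n-1) - (1 - 2*β)))
          = (n:ℝ) * (g (n-1) - (1 - 2*β))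
      rw [hcast]
      field_simp
    simpa using h2
  have L0 : Tendsto (fun n : ℕ => (n:ℝ) * (g (n-1) - g n)) atTop (𝓝 0) := by
    have h := Lδ1.sub Lδ
    have h2 := h.congr (fun n => by ring :
      ∀ n : ℕ, (n:ℝ) * (g (n-1) - (1 - 2*β)) - (n:ℝ) * (g n - (1 - 2*β))
        = (n:ℝ) * (g (n-1) - g n))
    simpa using h2
  -- sqrt limits
  have Ls : Tendsto (fun n : ℕ => Real.sqrt (g n)) atTop (𝓝 (Real.sqrt (1 - 2*β))) :=
    (Real.continuous_sqrt.tendsto _).comp L_g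
  have Ls1 : Tendsto (fun n : ℕ => Real.sqrt (g (n-1))) atTop (𝓝 (Real.sqrt (1 - 2*β))) :=
    (Real.continuous_sqrt.tendsto _).comp L_g1
  -- middle term
  have Lmid : Tendsto (fun n : ℕ =>
      (n:ℝ) * ((Real.sqrt (g n))⁻¹ - (Real.sqrt (g (n-1)))⁻¹)) atTop (𝓝 0) := by
    have hD := ((Ls.mul Ls1).mul (Ls.add Ls1)).inv₀
      (by positivity : (Real.sqrt (1-2*β) * Real.sqrt (1-2*β) * (Real.sqrt (1-2*β) + Real.sqrt (1-2*β))) ≠ 0)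
    have h := L0.mul hD
    have h2 : Tendsto (fun n : ℕ =>
        (n:ℝ) * ((Real.sqrt (g n))⁻¹ - (Real.sqrt (g (n-1)))⁻¹)) atTop
        (𝓝 (0 * (Real.sqrt (1-2*β) * Real.sqrt (1-2*β)
          * (Real.sqrt (1-2*β) + Real.sqrt (1-2*β)))⁻¹)) := by
      refine h.congr' ?_
      filter_upwards [eventually_ge_atTop 2] with n hn
      rw [inv_sqrt_sub (g n) (g (n-1)) (gpos n (by omega)) (gpos (n-1) (by omega))]
      ring
    simpa using h2
  -- last term
  have Llast : Tendsto (fun n : ℕ =>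
      ((n:ℝ) * (1 - (1 - ((n:ℝ))⁻¹) ^ (1 - β))) * (Real.sqrt (g (n-1)))⁻¹) atTop
      (𝓝 ((1 - β) * (Real.sqrt (1 - 2*β))⁻¹)) := by
    have h0 := (((lem_slope (-1) (1 - β)).neg).comp lem_invnat)
    have h1 : Tendsto (fun n : ℕ => (n:ℝ) * (1 - (1 - ((n:ℝ))⁻¹) ^ (1 - β))) atTop
        (𝓝 (-((1 - β) * (-1)))) := by
      refine h0.congr' ?_
      filter_upwards [eventually_ge_atTop 1] with n hn
      show -(((1 + (-1) * ((n:ℝ))⁻¹) ^ (1 - β) - 1) / ((n:ℝ))⁻¹)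
          = (n:ℝ) * (1 - (1 - ((n:ℝ))⁻¹) ^ (1 - β))
      rw [show (1 + (-1) * ((n:ℝ))⁻¹) = 1 - ((n:ℝ))⁻¹ by ring, div_eq_mul_inv, inv_inv]
      ring
    have h1' : Tendsto (fun n : ℕ => (n:ℝ) * (1 - (1 - ((n:ℝ))⁻¹) ^ (1 - β))) atTop
        (𝓝 (1 - β)) := by simpa using h1
    exact h1'.mul (Ls1.inv₀ hsa.ne')
  -- combined limit
  have Lfin := (Ls.sub Lmid).sub Llast
  have hlim : Real.sqrt (1 - 2*β) - 0 - (1 - β) * (Real.sqrt (1 - 2*β))⁻¹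
      = -β / Real.sqrt (1 - 2*β) := by
    have hss : Real.sqrt (1 - 2*β) * Real.sqrt (1 - 2*β) = 1 - 2*β :=
      Real.mul_self_sqrt hα.le
    field_simp
    linear_combination hss
  rw [← hlim]
  refine Tendsto.congr' ?_ Lfin
  filter_upwards [eventually_ge_atTop 2] with n hn
  -- pointwise identity
  have hn1 : 1 ≤ n := by omega
  have hm1 : 1 ≤ n - 1 := by omega
  have hN : (0:ℝ) < n := by exact_mod_cast hn1
  have hN2 : (2:ℝ) ≤ (n:ℝ) := by exact_mod_cast hn
  have hcast : (((n-1:ℕ)):ℝ) = (n:ℝ) - 1 := by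
    rw [Nat.cast_sub (by omega), Nat.cast_one]
  have hM : (0:ℝ) < (n:ℝ) - 1 := by linarith
  have hgn := gpos n hn1
  have hgm := gpos (n-1) hm1
  have hqn : q n = (n:ℝ) ^ (β - 1) * Real.sqrt (g n) := by
    rw [hq n hn1, key_q β hβ0 hβ2 n hn1]
  have hqm : q (n-1) = (((n-1:ℕ)):ℝ) ^ (β - 1) * Real.sqrt (g (n-1)) := by
    rw [hq (n-1) hm1, key_q β hβ0 hβ2 (n-1) hm1]
  rw [hγ n hn, hqn, hqm]
  -- inverse expansions
  have i1 : (((n:ℝ)) ^ (β - 1))⁻¹ = ((n:ℝ)) ^ (1 - β) := by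
    rw [← Real.rpow_neg hN.le, show -(β - 1) = 1 - β from by ring]
  have i2 : (((((n-1:ℕ)):ℝ)) ^ (β - 1))⁻¹ = (((n:ℝ)) - 1) ^ (1 - β) := by
    rw [hcast, ← Real.rpow_neg hM.le, show -(β - 1) = 1 - β from by ring]
  have e1 : ((n:ℝ)) ^ (1 - β) * ((n:ℝ)) ^ (β - 1) = 1 := by
    rw [rpow_sum3 hN, show (1 - β) + (β - 1) = 0 from by ring, Real.rpow_zero]
  have e2 : ((n:ℝ)) ^ (1 - β) * ((n:ℝ)) ^ (-1 + 2*β) * ((n:ℝ)) ^ (1 - β) = (n:ℝ) := by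
    rw [rpow_sum3 hN, rpow_sum3 hN,
      show (1 - β) + (-1 + 2*β) + (1 - β) = 1 from by ring, Real.rpow_one]
  have e3 : ((n:ℝ)) ^ (1 - β) * ((n:ℝ)) ^ (-1 + 2*β) * (((n:ℝ)) - 1) ^ (1 - β)
      = (n:ℝ) * (1 - ((n:ℝ))⁻¹) ^ (1 - β) := by
    rw [show (1 - ((n:ℝ))⁻¹) = ((n:ℝ) - 1)/(n:ℝ) from by field_simp,
      Real.div_rpow hM.le hN.le, rpow_sum3 hN,
      show (1 - β) + (-1 + 2*β) = 1 + (-(1 - β)) from by ring,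
      ← rpow_one_add hN, Real.rpow_neg hN.le]
    ring
  rw [mul_inv, mul_inv, i1, i2]
  linear_combination (-(Real.sqrt (g n))) * e1 + (Real.sqrt (g n))⁻¹ * e2
    - (Real.sqrt (g (n-1)))⁻¹ * e3
end

section
/- Let $0<\beta<1/2$, $q_n = \sqrt{n^{-1+2\beta} - (n+1)^{-1+2\beta}}$ and $\gamma_n = q_n^{-1}-q_{n-1}^{-1}$. Then $m\left(\frac{\gamma_m}{\gamma_{m-1}} - 1\right) \to -\beta$ and $m\left(\frac{q_{m-1}}{q_{m-2}} - 1\right) \to \beta - 1$ as $m\to\infty$, and consequently $m\big(1 - (\gamma_{m-1}^{-1}-q_{m-1})\gamma_m\big) \to 1$. -/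
open Filter Set Real

noncomputable def fM (α t : ℝ) : ℝ := 1 - (1+t)^(-α)
noncomputable def fN (α t : ℝ) : ℝ := (1-t)^(-α) - 1
noncomputable def fD (α t : ℝ) : ℝ := (1-2*t)^(-α) - (1-t)^(-α)
noncomputable def gA (α t : ℝ) : ℝ := (Real.sqrt (fM α t))⁻¹ - (Real.sqrt (fN α t))⁻¹
noncomputable def gB (α t : ℝ) : ℝ := (Real.sqrt (fN α t))⁻¹ - (Real.sqrt (fD α t))⁻¹

private lemma hdA (c t : ℝ) (h : 1 - t ≠ 0) :
    HasDerivAt (fun x : ℝ => (1 - x) ^ c) (-c * (1 - t) ^ (c - 1)) t := by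
  have h1 : HasDerivAt (fun x : ℝ => 1 - x) (-1) t := by
    simpa using (hasDerivAt_id t).const_sub (1:ℝ)
  have := h1.rpow_const (p := c) (Or.inl h)
  convert this using 1 <;> ring

private lemma hdB (c t : ℝ) (h : 1 + t ≠ 0) :
    HasDerivAt (fun x : ℝ => (1 + x) ^ c) (c * (1 + t) ^ (c - 1)) t := by
  have h1 : HasDerivAt (fun x : ℝ => 1 + x) 1 t := by
    simpa using (hasDerivAt_id t).const_add (1:ℝ)
  have := h1.rpow_const (p := c) (Or.inl h)
  convert this using 1 <;> ring

private lemma hdC (c t : ℝ) (h : 1 - 2*t ≠ 0) :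
    HasDerivAt (fun x : ℝ => (1 - 2*x) ^ c) (-2*c * (1 - 2*t) ^ (c - 1)) t := by
  have h1 : HasDerivAt (fun x : ℝ => 1 - 2*x) (-2) t := by
    simpa using ((hasDerivAt_id t).const_mul (2:ℝ)).const_sub (1:ℝ)
  have := h1.rpow_const (p := c) (Or.inl h)
  convert this using 1 <;> ring

private lemma lim_lin {f : ℝ → ℝ} {a : ℝ} (h : HasDerivAt f a 0) (h0 : f 0 = 0) :
    Tendsto (fun t => f t / t) (nhdsWithin 0 (Ioi (0:ℝ))) (nhds a) := by
  have h1 : Tendsto (slope f 0) (nhdsWithin 0 {(0:ℝ)}ᶜ) (nhds a) :=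
    hasDerivAt_iff_tendsto_slope.mp h
  have h2 : Tendsto (slope f 0) (nhdsWithin 0 (Ioi (0:ℝ))) (nhds a) :=
    h1.mono_left (nhdsWithin_mono _ (fun x hx => ne_of_gt hx))
  refine h2.congr (fun t => ?_)
  simp [slope_def_field, h0, div_eq_div_iff]

private lemma lim_sq {f f' : ℝ → ℝ} {a : ℝ}
    (hder : ∀ t ∈ Ioo (0:ℝ) (1/2), HasDerivAt f (f' t) t)
    (hder0 : HasDerivAt f (f' 0) 0)
    (h2 : HasDerivAt f' a 0)
    (hf0 : f 0 = 0) (hf'0 : f' 0 = 0) :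
    Tendsto (fun t => f t / t^2) (nhdsWithin 0 (Ioi (0:ℝ))) (nhds (a/2)) := by
  have hmem : Ioo (0:ℝ) (1/2) ∈ nhdsWithin 0 (Ioi (0:ℝ)) :=
    Ioo_mem_nhdsGT_of_mem ⟨le_rfl, by norm_num⟩
  apply HasDerivAt.lhopital_zero_nhdsGT (g' := fun t => 2*t)
  · exact Filter.eventually_of_mem hmem (fun t ht => hder t ht)
  · refine Eventually.of_forall fun t => ?_
    simpa using hasDerivAt_pow 2 t
  · exact eventually_nhdsWithin_of_forall fun t (ht : t ∈ Ioi (0:ℝ)) => by have h0 : 0 < t := ht; positivity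
  · have : Tendsto f (nhdsWithin 0 (Ioi (0:ℝ))) (nhds (f 0)) :=
      (hder0.continuousAt.tendsto).mono_left nhdsWithin_le_nhds
    rwa [hf0] at this
  · have : Tendsto (fun t : ℝ => t^2) (nhdsWithin 0 (Ioi (0:ℝ))) (nhds (0^2)) :=
      ((continuous_pow 2).tendsto 0).mono_left nhdsWithin_le_nhds
    simpa using this
  · have := (lim_lin h2 hf'0).div_const 2
    refine this.congr fun t => ?_
    rw [div_div, mul_comm]

private lemma lim_cube {f f' f'' : ℝ → ℝ} {a : ℝ}
    (hder : ∀ t ∈ Ioo (0:ℝ) (1/2), HasDerivAt f (f' t) t)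
    (hder0 : HasDerivAt f (f' 0) 0)
    (hder' : ∀ t ∈ Ioo (0:ℝ) (1/2), HasDerivAt f' (f'' t) t)
    (hder'0 : HasDerivAt f' (f'' 0) 0)
    (h3 : HasDerivAt f'' a 0)
    (hf0 : f 0 = 0) (hf'0 : f' 0 = 0) (hf''0 : f'' 0 = 0) :
    Tendsto (fun t => f t / t^3) (nhdsWithin 0 (Ioi (0:ℝ))) (nhds (a/6)) := by
  have hmem : Ioo (0:ℝ) (1/2) ∈ nhdsWithin 0 (Ioi (0:ℝ)) :=
    Ioo_mem_nhdsGT_of_mem ⟨le_rfl, by norm_num⟩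
  apply HasDerivAt.lhopital_zero_nhdsGT (g' := fun t => 3*t^2)
  · exact Filter.eventually_of_mem hmem (fun t ht => hder t ht)
  · refine Eventually.of_forall fun t => ?_
    simpa using hasDerivAt_pow 3 t
  · exact eventually_nhdsWithin_of_forall fun t (ht : t ∈ Ioi (0:ℝ)) => by have h0 : 0 < t := ht; positivity
  · have : Tendsto f (nhdsWithin 0 (Ioi (0:ℝ))) (nhds (f 0)) :=
      (hder0.continuousAt.tendsto).mono_left nhdsWithin_le_nhds
    rwa [hf0] at this
  · have : Tendsto (fun t : ℝ => t^3) (nhdsWithin 0 (Ioi (0:ℝ))) (nhds ((0:ℝ)^3)) :=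
      ((continuous_pow 3).tendsto 0).mono_left nhdsWithin_le_nhds
    simpa using this
  · have := (lim_sq hder' hder'0 h3 hf'0 hf''0).div_const 3
    rw [show a/2/3 = a/6 by ring] at this
    refine this.congr fun t => ?_
    rw [div_div, mul_comm]

section Base
variable {α : ℝ} (hα0 : 0 < α) (hα1 : α < 1)

private lemma dA (e t : ℝ) (h0 : 0 ≤ t) (h1 : t < 1/2) :
    HasDerivAt (fun x : ℝ => (1-x)^e) (-e * (1-t)^(e-1)) t := hdA e t (by linarith)
private lemma dB (e t : ℝ) (h0 : 0 ≤ t) (h1 : t < 1/2) :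
    HasDerivAt (fun x : ℝ => (1+x)^e) (e * (1+t)^(e-1)) t := hdB e t (by linarith)
private lemma dC (e t : ℝ) (h0 : 0 ≤ t) (h1 : t < 1/2) :
    HasDerivAt (fun x : ℝ => (1-2*x)^e) (-2*e * (1-2*t)^(e-1)) t := hdC e t (by linarith)

-- b1 : N/t → α
private lemma b1 : Tendsto (fun t => fN α t / t) (nhdsWithin 0 (Ioi (0:ℝ))) (nhds α) := by
  apply lim_lin (f := fN α)
  · have h := (dA (-α) 0 le_rfl (by norm_num)).sub_const 1
    have : HasDerivAt (fun x : ℝ => (1-x)^(-α) - 1) α 0 := by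
      refine h.congr_deriv ?_
      norm_num [Real.one_rpow]
    exact this
  · norm_num [fN, Real.one_rpow]

-- b2 : M/t → α
private lemma b2 : Tendsto (fun t => fM α t / t) (nhdsWithin 0 (Ioi (0:ℝ))) (nhds α) := by
  apply lim_lin (f := fM α)
  · have h := (hasDerivAt_const (0:ℝ) (1:ℝ)).sub (dB (-α) 0 le_rfl (by norm_num))
    have : HasDerivAt (fun x : ℝ => 1 - (1+x)^(-α)) α 0 := by
      refine h.congr_deriv ?_
      norm_num [Real.one_rpow]
    exact this
  · norm_num [fM, Real.one_rpow]

-- b3 : D/t → α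
private lemma b3 : Tendsto (fun t => fD α t / t) (nhdsWithin 0 (Ioi (0:ℝ))) (nhds α) := by
  apply lim_lin (f := fD α)
  · have h := (dC (-α) 0 le_rfl (by norm_num)).sub (dA (-α) 0 le_rfl (by norm_num))
    have : HasDerivAt (fun x : ℝ => (1-2*x)^(-α) - (1-x)^(-α)) α 0 := by
      refine h.congr_deriv ?_
      norm_num [Real.one_rpow]
      ring
    exact this
  · norm_num [fD, Real.one_rpow]

-- b4 : (D - N)/t² → α(α+1)
private lemma b4 : Tendsto (fun t => (fD α t - fN α t) / t^2) (nhdsWithin 0 (Ioi (0:ℝ)))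
    (nhds (α*(α+1))) := by
  have hder : ∀ t, 0 ≤ t → t < 1/2 → HasDerivAt (fun t => fD α t - fN α t)
      ((-2*(-α) * (1-2*t)^(-α-1) - -(-α) * (1-t)^(-α-1)) - -(-α) * (1-t)^(-α-1)) t := by
    intro t h0 h1
    simp only [fD, fN]
    exact ((dC (-α) t h0 h1).sub (dA (-α) t h0 h1)).sub ((dA (-α) t h0 h1).sub_const 1)
  have hder' : HasDerivAt (fun t : ℝ =>
      (-2*(-α) * (1-2*t)^(-α-1) - -(-α) * (1-t)^(-α-1)) - -(-α) * (1-t)^(-α-1))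
      (2*(α*(α+1))) 0 := by
    have h1 := (((dC (-α-1) 0 le_rfl (by norm_num)).const_mul (-2*(-α))).sub
      ((dA (-α-1) 0 le_rfl (by norm_num)).const_mul (-(-α)))).sub
      ((dA (-α-1) 0 le_rfl (by norm_num)).const_mul (-(-α)))
    refine h1.congr_deriv ?_
    norm_num [Real.one_rpow]
    ring
  have h := lim_sq (fun t ht => hder t ht.1.le ht.2) (by simpa using hder 0 le_rfl (by norm_num))
      hder' (by norm_num [fD, fN, Real.one_rpow]; try ring) (by norm_num [Real.one_rpow]; try ring)
  convert h using 2
  ring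

-- b5 : (N - M)/t² → α(α+1)
private lemma b5 : Tendsto (fun t => (fN α t - fM α t) / t^2) (nhdsWithin 0 (Ioi (0:ℝ)))
    (nhds (α*(α+1))) := by
  have hder : ∀ t, 0 ≤ t → t < 1/2 → HasDerivAt (fun t => fN α t - fM α t)
      (-(-α) * (1-t)^(-α-1) - (0 - -α * (1+t)^(-α-1))) t := by
    intro t h0 h1
    simp only [fN, fM]
    exact ((dA (-α) t h0 h1).sub_const 1).sub
      ((hasDerivAt_const t (1:ℝ)).sub (dB (-α) t h0 h1))
  have hder' : HasDerivAt (fun t : ℝ =>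
      -(-α) * (1-t)^(-α-1) - (0 - -α * (1+t)^(-α-1))) (2*(α*(α+1))) 0 := by
    have h1 := ((dA (-α-1) 0 le_rfl (by norm_num)).const_mul (-(-α))).sub
      ((hasDerivAt_const (0:ℝ) (0:ℝ)).sub ((dB (-α-1) 0 le_rfl (by norm_num)).const_mul (-α)))
    refine h1.congr_deriv ?_
    norm_num [Real.one_rpow]
    ring
  have h := lim_sq (fun t ht => hder t ht.1.le ht.2) (by simpa using hder 0 le_rfl (by norm_num))
      hder' (by norm_num [fN, fM, Real.one_rpow]; try ring) (by norm_num [Real.one_rpow]; try ring)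
  convert h using 2
  ring

-- b6 : (D - M)/t² → 2α(α+1)
private lemma b6 : Tendsto (fun t => (fD α t - fM α t) / t^2) (nhdsWithin 0 (Ioi (0:ℝ)))
    (nhds (2*(α*(α+1)))) := by
  have hder : ∀ t, 0 ≤ t → t < 1/2 → HasDerivAt (fun t => fD α t - fM α t)
      ((-2*(-α) * (1-2*t)^(-α-1) - -(-α) * (1-t)^(-α-1)) - (0 - -α * (1+t)^(-α-1))) t := by
    intro t h0 h1
    simp only [fD, fM]
    exact ((dC (-α) t h0 h1).sub (dA (-α) t h0 h1)).sub
      ((hasDerivAt_const t (1:ℝ)).sub (dB (-α) t h0 h1))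
  have hder' : HasDerivAt (fun t : ℝ =>
      (-2*(-α) * (1-2*t)^(-α-1) - -(-α) * (1-t)^(-α-1)) - (0 - -α * (1+t)^(-α-1)))
      (2*(2*(α*(α+1)))) 0 := by
    have h1 := (((dC (-α-1) 0 le_rfl (by norm_num)).const_mul (-2*(-α))).sub
      ((dA (-α-1) 0 le_rfl (by norm_num)).const_mul (-(-α)))).sub
      ((hasDerivAt_const (0:ℝ) (0:ℝ)).sub ((dB (-α-1) 0 le_rfl (by norm_num)).const_mul (-α)))
    refine h1.congr_deriv ?_
    norm_num [Real.one_rpow]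
    ring
  have h := lim_sq (fun t ht => hder t ht.1.le ht.2) (by simpa using hder 0 le_rfl (by norm_num))
      hder' (by norm_num [fD, fM, Real.one_rpow]; try ring) (by norm_num [Real.one_rpow]; try ring)
  convert h using 2
  ring

-- b7 : (2N - M - D)/t³ → -α(α+1)(α+2)
private lemma b7 : Tendsto (fun t => (2*fN α t - fM α t - fD α t) / t^3)
    (nhdsWithin 0 (Ioi (0:ℝ))) (nhds (-(α*(α+1)*(α+2)))) := by
  have hder : ∀ t, 0 ≤ t → t < 1/2 → HasDerivAt (fun t => 2*fN α t - fM α t - fD α t)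
      (2*(-(-α) * (1-t)^(-α-1)) - (0 - -α * (1+t)^(-α-1))
        - (-2*(-α) * (1-2*t)^(-α-1) - -(-α) * (1-t)^(-α-1))) t := by
    intro t h0 h1
    simp only [fN, fM, fD]
    exact ((((dA (-α) t h0 h1).sub_const 1).const_mul 2).sub
      ((hasDerivAt_const t (1:ℝ)).sub (dB (-α) t h0 h1))).sub
      ((dC (-α) t h0 h1).sub (dA (-α) t h0 h1))
  have hder' : ∀ t, 0 ≤ t → t < 1/2 → HasDerivAt (fun t : ℝ =>
      2*(-(-α) * (1-t)^(-α-1)) - (0 - -α * (1+t)^(-α-1))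
        - (-2*(-α) * (1-2*t)^(-α-1) - -(-α) * (1-t)^(-α-1)))
      (2*(-(-α) * (-(-α-1) * (1-t)^(-α-1-1))) - (0 - -α * ((-α-1) * (1+t)^(-α-1-1)))
        - (-2*(-α) * (-2*(-α-1) * (1-2*t)^(-α-1-1))
            - -(-α) * (-(-α-1) * (1-t)^(-α-1-1)))) t := by
    intro t h0 h1
    exact ((((dA (-α-1) t h0 h1).const_mul (-(-α))).const_mul 2).sub
      ((hasDerivAt_const t (0:ℝ)).sub ((dB (-α-1) t h0 h1).const_mul (-α)))).sub
      (((dC (-α-1) t h0 h1).const_mul (-2*(-α))).sub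
        ((dA (-α-1) t h0 h1).const_mul (-(-α))))
  have hder'' : HasDerivAt (fun t : ℝ =>
      2*(-(-α) * (-(-α-1) * (1-t)^(-α-1-1))) - (0 - -α * ((-α-1) * (1+t)^(-α-1-1)))
        - (-2*(-α) * (-2*(-α-1) * (1-2*t)^(-α-1-1))
            - -(-α) * (-(-α-1) * (1-t)^(-α-1-1))))
      (6*(-(α*(α+1)*(α+2)))) 0 := by
    have h1 := ((((dA (-α-1-1) 0 le_rfl (by norm_num)).const_mul (-(-α-1))).const_mul
        (-(-α))).const_mul 2).sub
      ((hasDerivAt_const (0:ℝ) (0:ℝ)).sub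
        (((dB (-α-1-1) 0 le_rfl (by norm_num)).const_mul (-α-1)).const_mul (-α)))
      |>.sub ((((dC (-α-1-1) 0 le_rfl (by norm_num)).const_mul (-2*(-α-1))).const_mul
        (-2*(-α))).sub
        (((dA (-α-1-1) 0 le_rfl (by norm_num)).const_mul (-(-α-1))).const_mul (-(-α))))
    refine h1.congr_deriv ?_
    norm_num [Real.one_rpow]
    ring
  have h := lim_cube (fun t ht => hder t ht.1.le ht.2) (by simpa using hder 0 le_rfl (by norm_num))
      (fun t ht => hder' t ht.1.le ht.2) (hder' 0 le_rfl (by norm_num)) hder''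
      (by norm_num [fN, fM, fD, Real.one_rpow]; try ring)
      (by norm_num [Real.one_rpow]; try ring)
      (by norm_num [Real.one_rpow]; try ring)
  convert h using 2
  ring
end Base

private lemma id_sub {X Y t : ℝ} (ht : 0 < t) (hY : 0 < Y) (hX : 0 < X) :
    ((X - Y)/t^2) / (Real.sqrt (Y/t) * Real.sqrt (X/t) + Y/t)
      = (Real.sqrt X / Real.sqrt Y - 1)/t := by
  rw [Real.sqrt_div hY.le, Real.sqrt_div hX.le]
  have hsx : Real.sqrt X ^ 2 = X := Real.sq_sqrt hX.le
  have hsy : Real.sqrt Y ^ 2 = Y := Real.sq_sqrt hY.le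
  have hst : Real.sqrt t ^ 2 = t := Real.sq_sqrt ht.le
  have hx0 : 0 < Real.sqrt X := Real.sqrt_pos.mpr hX
  have hy0 : 0 < Real.sqrt Y := Real.sqrt_pos.mpr hY
  have ht0 : 0 < Real.sqrt t := Real.sqrt_pos.mpr ht
  set sx := Real.sqrt X
  set sy := Real.sqrt Y
  set st := Real.sqrt t
  rw [← hsx, ← hsy, ← hst]
  have h1 : sy/st * (sx/st) + sy^2/st^2 ≠ 0 := by
    have : 0 < sy/st * (sx/st) + sy^2/st^2 := by positivity
    exact this.ne'
  field_simp
  ring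

private lemma id3 {M N D t : ℝ} (ht : 0 < t) (hM : 0 < M) (hN : 0 < N) (hD : 0 < D) :
    ((D - M)/t^2) / ((Real.sqrt (D/t) + Real.sqrt (M/t))*(Real.sqrt (N/t) + Real.sqrt (M/t)))
      = ((Real.sqrt D + Real.sqrt N)/(Real.sqrt N + Real.sqrt M) - 1)/t := by
  rw [Real.sqrt_div hM.le, Real.sqrt_div hN.le, Real.sqrt_div hD.le]
  have hsm : Real.sqrt M ^ 2 = M := Real.sq_sqrt hM.le
  have hsn : Real.sqrt N ^ 2 = N := Real.sq_sqrt hN.le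
  have hsd : Real.sqrt D ^ 2 = D := Real.sq_sqrt hD.le
  have hst : Real.sqrt t ^ 2 = t := Real.sq_sqrt ht.le
  have hm0 : 0 < Real.sqrt M := Real.sqrt_pos.mpr hM
  have hn0 : 0 < Real.sqrt N := Real.sqrt_pos.mpr hN
  have hd0 : 0 < Real.sqrt D := Real.sqrt_pos.mpr hD
  have ht0 : 0 < Real.sqrt t := Real.sqrt_pos.mpr ht
  set sm := Real.sqrt M
  set sn := Real.sqrt N
  set sd := Real.sqrt D
  set st := Real.sqrt t
  rw [← hsm, ← hsd, ← hst]
  have h1 : (sd/st + sm/st)*(sn/st + sm/st) ≠ 0 := by positivity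
  have h2 : sn + sm ≠ 0 := by positivity
  field_simp
  ring

private lemma id4 {M N D t : ℝ} (ht : t ≠ 0) (hDN : D - N ≠ 0) :
    ((2*N - M - D)/t^3)/((D - N)/t^2) = ((N-M)/(D-N) - 1)/t := by
  field_simp
  ring

private lemma id5 {M N D : ℝ} (hM : 0 < M) (hN : 0 < N) (hD : 0 < D) (hND : N < D) :
    ((Real.sqrt M)⁻¹ - (Real.sqrt N)⁻¹)/((Real.sqrt N)⁻¹ - (Real.sqrt D)⁻¹)
      = ((N-M)/(D-N)) * ((Real.sqrt D + Real.sqrt N)/(Real.sqrt N + Real.sqrt M))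
          * (Real.sqrt D/Real.sqrt M) := by
  have hsm : Real.sqrt M ^ 2 = M := Real.sq_sqrt hM.le
  have hsn : Real.sqrt N ^ 2 = N := Real.sq_sqrt hN.le
  have hsd : Real.sqrt D ^ 2 = D := Real.sq_sqrt hD.le
  have hm0 : 0 < Real.sqrt M := Real.sqrt_pos.mpr hM
  have hn0 : 0 < Real.sqrt N := Real.sqrt_pos.mpr hN
  have hd0 : 0 < Real.sqrt D := Real.sqrt_pos.mpr hD
  have hlt : Real.sqrt N < Real.sqrt D := Real.sqrt_lt_sqrt hN.le hND
  set sm := Real.sqrt M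
  set sn := Real.sqrt N
  set sd := Real.sqrt D
  rw [← hsm, ← hsn, ← hsd]
  have h1 : sn⁻¹ - sd⁻¹ ≠ 0 := by
    have : sd⁻¹ < sn⁻¹ := by
      apply inv_strictAnti₀ hn0 hlt
    exact (sub_pos.mpr this).ne'
  have h2 : sd^2 - sn^2 ≠ 0 := by nlinarith
  have h3 : sn + sm ≠ 0 := by positivity
  have h5 : sd - sn ≠ 0 := sub_ne_zero.mpr hlt.ne'
  rw [inv_sub_inv hm0.ne' hn0.ne', inv_sub_inv hn0.ne' hd0.ne']
  rw [div_div_div_eq]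
  field_simp
  ring

private lemma id6 {M N : ℝ} (hM : 0 < M) (hN : 0 < N) :
    Real.sqrt N * ((Real.sqrt M)⁻¹ - (Real.sqrt N)⁻¹) = Real.sqrt N / Real.sqrt M - 1 := by
  have hm0 : 0 < Real.sqrt M := Real.sqrt_pos.mpr hM
  have hn0 : 0 < Real.sqrt N := Real.sqrt_pos.mpr hN
  field_simp

private lemma id_xyz {X Y Z t : ℝ} (ht : t ≠ 0) :
    (X*Y*Z - 1)/t = ((X-1)/t)*(Y*Z) + (((Y-1)/t)*Z + (Z-1)/t) := by
  field_simp
  ring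

private lemma key (α : ℝ) (hα0 : 0 < α) (hα1 : α < 1) :
    Tendsto (fun t => (gA α t / gB α t - 1)/t) (nhdsWithin 0 (Ioi (0:ℝ)))
      (nhds ((α-1)/2))
    ∧ Tendsto (fun t => (Real.sqrt (fN α t)/Real.sqrt (fD α t) - 1)/t)
      (nhdsWithin 0 (Ioi (0:ℝ))) (nhds (-((α+1)/2)))
    ∧ Tendsto (fun t => (1 - gA α t / gB α t + Real.sqrt (fN α t) * gA α t)/t)
      (nhdsWithin 0 (Ioi (0:ℝ))) (nhds 1) := by
  have hα0' : (0:ℝ) < α*(α+1) := by nlinarith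
  have hIoo : ∀ᶠ t in nhdsWithin 0 (Ioi (0:ℝ)), t ∈ Ioo (0:ℝ) (1/2) :=
    eventually_of_mem (Ioo_mem_nhdsGT_of_mem ⟨le_rfl, by norm_num⟩) (fun t ht => ht)
  -- positivity of M, N, D and differences
  have hpos : ∀ {f : ℝ → ℝ} {c : ℝ} {k : ℕ}, 0 < c →
      Tendsto (fun t => f t / t^k) (nhdsWithin 0 (Ioi (0:ℝ))) (nhds c) →
      ∀ᶠ t in nhdsWithin 0 (Ioi (0:ℝ)), 0 < f t := by
    intro f c k hc h
    filter_upwards [h.eventually (lt_mem_nhds hc), hIoo] with t h1 h2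
    have htk : (0:ℝ) < t^k := pow_pos h2.1 k
    have : f t = (f t / t^k) * t^k := (div_mul_cancel₀ _ htk.ne').symm
    rw [this]
    exact mul_pos h1 htk
  have hM0 : ∀ᶠ t in nhdsWithin 0 (Ioi (0:ℝ)), 0 < fM α t := by
    have := hpos (k := 1) hα0 (by simpa using b2 (α := α))
    exact this
  have hN0 : ∀ᶠ t in nhdsWithin 0 (Ioi (0:ℝ)), 0 < fN α t :=
    hpos (k := 1) hα0 (by simpa using b1 (α := α))
  have hD0 : ∀ᶠ t in nhdsWithin 0 (Ioi (0:ℝ)), 0 < fD α t :=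
    hpos (k := 1) hα0 (by simpa using b3 (α := α))
  have hDN : ∀ᶠ t in nhdsWithin 0 (Ioi (0:ℝ)), 0 < fD α t - fN α t :=
    hpos (k := 2) hα0' b4
  -- sqrt limits
  have sM : Tendsto (fun t => Real.sqrt (fM α t / t)) (nhdsWithin 0 (Ioi (0:ℝ)))
      (nhds (Real.sqrt α)) := (Real.continuous_sqrt.tendsto α).comp b2
  have sN : Tendsto (fun t => Real.sqrt (fN α t / t)) (nhdsWithin 0 (Ioi (0:ℝ)))
      (nhds (Real.sqrt α)) := (Real.continuous_sqrt.tendsto α).comp b1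
  have sD : Tendsto (fun t => Real.sqrt (fD α t / t)) (nhdsWithin 0 (Ioi (0:ℝ)))
      (nhds (Real.sqrt α)) := (Real.continuous_sqrt.tendsto α).comp b3
  have hss : Real.sqrt α * Real.sqrt α = α := Real.mul_self_sqrt hα0.le
  -- T2
  have T2 : Tendsto (fun t => (Real.sqrt (fN α t)/Real.sqrt (fD α t) - 1)/t)
      (nhdsWithin 0 (Ioi (0:ℝ))) (nhds (-((α+1)/2))) := by
    have c2 : Tendsto (fun t => Real.sqrt (fD α t/t) * Real.sqrt (fN α t/t) + fD α t/t)
        (nhdsWithin 0 (Ioi (0:ℝ))) (nhds (2*α)) := by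
      have h := (sD.mul sN).add (b3 (α := α))
      rwa [show Real.sqrt α * Real.sqrt α + α = 2*α by rw [hss]; ring] at h
    have base := ((b4 (α := α)).neg).div c2 (by positivity)
    rw [show -(α*(α+1))/(2*α) = -((α+1)/2) by field_simp] at base
    refine base.congr' ?_
    filter_upwards [hIoo, hN0, hD0] with t ht h2 h3
    simp only [Pi.div_apply]
    rw [show -((fD α t - fN α t)/t^2) = (fN α t - fD α t)/t^2 by ring]
    exact id_sub ht.1 h3 h2
  -- T4 : (√N/√M - 1)/t → (α+1)/2
  have T4 : Tendsto (fun t => (Real.sqrt (fN α t)/Real.sqrt (fM α t) - 1)/t)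
      (nhdsWithin 0 (Ioi (0:ℝ))) (nhds ((α+1)/2)) := by
    have c4 : Tendsto (fun t => Real.sqrt (fM α t/t) * Real.sqrt (fN α t/t) + fM α t/t)
        (nhdsWithin 0 (Ioi (0:ℝ))) (nhds (2*α)) := by
      have h := (sM.mul sN).add (b2 (α := α))
      rwa [show Real.sqrt α * Real.sqrt α + α = 2*α by rw [hss]; ring] at h
    have base := (b5 (α := α)).div c4 (by positivity)
    rw [show α*(α+1)/(2*α) = (α+1)/2 by field_simp] at base
    refine base.congr' ?_
    filter_upwards [hIoo, hN0, hM0] with t ht h2 h3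
    simp only [Pi.div_apply]
    exact id_sub ht.1 h3 h2
  -- hZ : (√D/√M - 1)/t → α+1
  have hZ : Tendsto (fun t => (Real.sqrt (fD α t)/Real.sqrt (fM α t) - 1)/t)
      (nhdsWithin 0 (Ioi (0:ℝ))) (nhds (α+1)) := by
    have cZ : Tendsto (fun t => Real.sqrt (fM α t/t) * Real.sqrt (fD α t/t) + fM α t/t)
        (nhdsWithin 0 (Ioi (0:ℝ))) (nhds (2*α)) := by
      have h := (sM.mul sD).add (b2 (α := α))
      rwa [show Real.sqrt α * Real.sqrt α + α = 2*α by rw [hss]; ring] at h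
    have base := (b6 (α := α)).div cZ (by positivity)
    rw [show 2*(α*(α+1))/(2*α) = α+1 by field_simp] at base
    refine base.congr' ?_
    filter_upwards [hIoo, hD0, hM0] with t ht h2 h3
    simp only [Pi.div_apply]
    exact id_sub ht.1 h3 h2
  -- hY : ((√D+√N)/(√N+√M) - 1)/t → (α+1)/2
  have hY : Tendsto (fun t =>
      ((Real.sqrt (fD α t) + Real.sqrt (fN α t))/(Real.sqrt (fN α t) + Real.sqrt (fM α t)) - 1)/t)
      (nhdsWithin 0 (Ioi (0:ℝ))) (nhds ((α+1)/2)) := by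
    have cY : Tendsto (fun t =>
        (Real.sqrt (fD α t/t) + Real.sqrt (fM α t/t))*(Real.sqrt (fN α t/t) + Real.sqrt (fM α t/t)))
        (nhdsWithin 0 (Ioi (0:ℝ))) (nhds (4*α)) := by
      have h := (sD.add sM).mul (sN.add sM)
      rwa [show (Real.sqrt α + Real.sqrt α)*(Real.sqrt α + Real.sqrt α) = 4*α by
        rw [show (Real.sqrt α + Real.sqrt α)*(Real.sqrt α + Real.sqrt α)
          = 4*(Real.sqrt α * Real.sqrt α) by ring, hss]] at h
    have base := (b6 (α := α)).div cY (by positivity)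
    rw [show 2*(α*(α+1))/(4*α) = (α+1)/2 by field_simp; ring] at base
    refine base.congr' ?_
    filter_upwards [hIoo, hM0, hN0, hD0] with t ht h2 h3 h4
    simp only [Pi.div_apply]
    exact id3 ht.1 h2 h3 h4
  -- hX : ((N-M)/(D-N) - 1)/t → -(α+2)
  have hX : Tendsto (fun t => ((fN α t - fM α t)/(fD α t - fN α t) - 1)/t)
      (nhdsWithin 0 (Ioi (0:ℝ))) (nhds (-(α+2))) := by
    have base := (b7 (α := α)).div (b4 (α := α)) hα0'.ne'
    rw [show -(α*(α+1)*(α+2))/(α*(α+1)) = -(α+2) by field_simp] at base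
    refine base.congr' ?_
    filter_upwards [hIoo, hDN] with t ht h2
    simp only [Pi.div_apply]
    exact id4 ht.1.ne' h2.ne'
  -- t → 0
  have ht0 : Tendsto (fun t : ℝ => t) (nhdsWithin 0 (Ioi (0:ℝ))) (nhds 0) :=
    (tendsto_id (x := nhds (0:ℝ))).mono_left nhdsWithin_le_nhds
  -- hY1, hZ1
  have mk1 : ∀ {Y : ℝ → ℝ} {c : ℝ},
      Tendsto (fun t => (Y t - 1)/t) (nhdsWithin 0 (Ioi (0:ℝ))) (nhds c) →
      Tendsto Y (nhdsWithin 0 (Ioi (0:ℝ))) (nhds 1) := by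
    intro Y c h
    have h2 := tendsto_const_nhds (x := (1:ℝ)) (f := nhdsWithin 0 (Ioi (0:ℝ))) |>.add (ht0.mul h)
    rw [show (1:ℝ) + 0 * c = 1 by ring] at h2
    refine h2.congr' ?_
    filter_upwards [hIoo] with t ht
    rw [mul_comm, div_mul_cancel₀ _ ht.1.ne']
    ring
  have hY1 := mk1 hY
  have hZ1 : Tendsto (fun t => Real.sqrt (fD α t)/Real.sqrt (fM α t))
      (nhdsWithin 0 (Ioi (0:ℝ))) (nhds 1) := mk1 hZ
  -- T1
  have T1 : Tendsto (fun t => (gA α t / gB α t - 1)/t) (nhdsWithin 0 (Ioi (0:ℝ)))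
      (nhds ((α-1)/2)) := by
    have base := (hX.mul (hY1.mul hZ1)).add ((hY.mul hZ1).add hZ)
    rw [show -(α+2)*(1*1) + ((α+1)/2*1 + (α+1)) = (α-1)/2 by ring] at base
    refine base.congr' ?_
    filter_upwards [hIoo, hM0, hN0, hD0, hDN] with t ht h2 h3 h4 h5
    have hG : gA α t / gB α t = ((fN α t - fM α t)/(fD α t - fN α t))
        * ((Real.sqrt (fD α t) + Real.sqrt (fN α t))/(Real.sqrt (fN α t) + Real.sqrt (fM α t)))
        * (Real.sqrt (fD α t)/Real.sqrt (fM α t)) := by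
      simp only [gA, gB]
      exact id5 h2 h3 h4 (by linarith)
    rw [hG, id_xyz ht.1.ne']
  refine ⟨T1, T2, ?_⟩
  -- T3
  have base := T1.neg.add T4
  rw [show -((α-1)/2) + (α+1)/2 = 1 by ring] at base
  refine base.congr' ?_
  filter_upwards [hIoo, hM0, hN0] with t ht h2 h3
  rw [show (1 - gA α t / gB α t + Real.sqrt (fN α t) * gA α t)
      = 1 - gA α t / gB α t + (Real.sqrt (fN α t)/Real.sqrt (fM α t) - 1) by
    rw [← id6 h2 h3]; simp only [gA]]
  ring

theorem stmt_4 (β : ℝ) (hβ0 : 0 < β) (hβ2 : β < 1/2)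
    (q γ : ℕ → ℝ)
    (hq : ∀ n : ℕ, 1 ≤ n →
      q n = Real.sqrt ((n : ℝ) ^ (-1 + 2*β) - ((n : ℝ) + 1) ^ (-1 + 2*β)))
    (hγ : ∀ n : ℕ, 2 ≤ n → γ n = (q n)⁻¹ - (q (n-1))⁻¹) :
    Tendsto (fun m : ℕ => (m : ℝ) * (γ m / γ (m-1) - 1)) atTop (nhds (-β))
    ∧ Tendsto (fun m : ℕ => (m : ℝ) * (q (m-1) / q (m-2) - 1)) atTop (nhds (β - 1))
    ∧ Tendsto (fun m : ℕ => (m : ℝ) * (1 - ((γ (m-1))⁻¹ - q (m-1)) * γ m))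
        atTop (nhds 1) := by
  set α := 1 - 2*β with hαdef
  have hα0 : 0 < α := by rw [hαdef]; linarith
  have hα1 : α < 1 := by rw [hαdef]; linarith
  obtain ⟨T1, T2, T3⟩ := key α hα0 hα1
  have hcomp : Tendsto (fun m : ℕ => ((m:ℝ))⁻¹) atTop (nhdsWithin 0 (Ioi (0:ℝ))) := by
    rw [tendsto_nhdsWithin_iff]
    refine ⟨tendsto_inv_atTop_nhds_zero_nat, ?_⟩
    filter_upwards [eventually_gt_atTop 0] with m hm
    have hm' : (0:ℝ) < (m:ℝ) := Nat.cast_pos.mpr hm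
    exact mem_Ioi.mpr (inv_pos.mpr hm')
  have main : ∀ m : ℕ, 3 ≤ m →
      ((m:ℝ) * (γ m / γ (m-1) - 1)
          = (gA α ((m:ℝ))⁻¹ / gB α ((m:ℝ))⁻¹ - 1)/((m:ℝ))⁻¹
       ∧ (m:ℝ) * (q (m-1) / q (m-2) - 1)
          = (Real.sqrt (fN α ((m:ℝ))⁻¹)/Real.sqrt (fD α ((m:ℝ))⁻¹) - 1)/((m:ℝ))⁻¹
       ∧ (m:ℝ) * (1 - ((γ (m-1))⁻¹ - q (m-1)) * γ m)
          = (1 - gA α ((m:ℝ))⁻¹ / gB α ((m:ℝ))⁻¹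
              + Real.sqrt (fN α ((m:ℝ))⁻¹) * gA α ((m:ℝ))⁻¹)/((m:ℝ))⁻¹) := by
    intro m hm
    have hmR : (3:ℝ) ≤ (m:ℝ) := by exact_mod_cast hm
    have hm0 : (0:ℝ) < (m:ℝ) := by linarith
    set t := ((m:ℝ))⁻¹ with htdef
    have ht0 : 0 < t := inv_pos.mpr hm0
    have htm : (m:ℝ) * t = 1 := mul_inv_cancel₀ hm0.ne'
    have htinv : t⁻¹ = (m:ℝ) := by rw [htdef, inv_inv]
    have ht3 : t ≤ 1/3 := by
      rw [htdef, inv_eq_one_div]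
      exact one_div_le_one_div_of_le (by norm_num) hmR
    have h1t : (0:ℝ) ≤ 1 - t := by linarith
    have h12t : (0:ℝ) ≤ 1 - 2*t := by linarith
    have h1pt : (0:ℝ) ≤ 1 + t := by linarith
    have hc1 : ((m-1:ℕ):ℝ) = (m:ℝ) - 1 := by
      rw [Nat.cast_sub (by omega)]; norm_num
    have hc2 : ((m-2:ℕ):ℝ) = (m:ℝ) - 2 := by
      rw [Nat.cast_sub (by omega)]; norm_num
    have hexp : (-1 + 2*β) = -α := by rw [hαdef]; ring
    have e1 : (m:ℝ) - 1 = (m:ℝ)*(1 - t) := by rw [mul_sub, mul_one, htm]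
    have e2 : (m:ℝ) + 1 = (m:ℝ)*(1 + t) := by rw [mul_add, mul_one, htm]
    have e3 : (m:ℝ) - 2 = (m:ℝ)*(1 - 2*t) := by
      rw [mul_sub, mul_one, show (m:ℝ)*(2*t) = 2*((m:ℝ)*t) by ring, htm]
      norm_num
    set c := (m:ℝ)^(-α) with hcdef
    have hcpos : 0 < c := Real.rpow_pos_of_pos hm0 _
    have hqm : q m = Real.sqrt (c * fM α t) := by
      rw [hq m (by omega)]
      congr 1
      rw [hexp, e2, Real.mul_rpow hm0.le h1pt]
      simp only [fM]
      ring
    have hqm1 : q (m-1) = Real.sqrt (c * fN α t) := by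
      rw [hq (m-1) (by omega)]
      congr 1
      rw [hexp, hc1, show (m:ℝ) - 1 + 1 = (m:ℝ) by ring, e1,
        Real.mul_rpow hm0.le h1t]
      simp only [fN]
      ring
    have hqm2 : q (m-2) = Real.sqrt (c * fD α t) := by
      rw [hq (m-2) (by omega)]
      congr 1
      rw [hexp, hc2, show (m:ℝ) - 2 + 1 = (m:ℝ) - 1 by ring, e3, e1,
        Real.mul_rpow hm0.le h12t, Real.mul_rpow hm0.le h1t]
      simp only [fD]
      ring
    have hsplit : ∀ x : ℝ, Real.sqrt (c*x) = Real.sqrt c * Real.sqrt x :=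
      fun x => Real.sqrt_mul (Real.rpow_nonneg hm0.le _) x
    set sc := Real.sqrt c with hscdef
    have hsc : 0 < sc := Real.sqrt_pos.mpr hcpos
    have hsc1 : sc * sc⁻¹ = 1 := mul_inv_cancel₀ hsc.ne'
    have hgm : γ m = sc⁻¹ * gA α t := by
      rw [hγ m (by omega), hqm, hqm1, hsplit, hsplit]
      simp only [gA]
      rw [mul_inv, mul_inv]
      ring
    have hgm1 : γ (m-1) = sc⁻¹ * gB α t := by
      rw [hγ (m-1) (by omega), show m - 1 - 1 = m - 2 from by omega, hqm1, hqm2,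
        hsplit, hsplit]
      simp only [gB]
      rw [mul_inv, mul_inv]
      ring
    refine ⟨?_, ?_, ?_⟩
    · rw [hgm, hgm1, mul_div_mul_left _ _ (inv_ne_zero hsc.ne'),
        div_eq_mul_inv _ t, htinv]
      ring
    · rw [hqm1, hqm2, hsplit, hsplit, mul_div_mul_left _ _ hsc.ne',
        div_eq_mul_inv _ t, htinv]
      ring
    · rw [hgm, hgm1, hqm1, hsplit, mul_inv, inv_inv]
      rw [show (sc * (gB α t)⁻¹ - sc * Real.sqrt (fN α t)) * (sc⁻¹ * gA α t)
          = (sc * sc⁻¹) * (((gB α t)⁻¹ - Real.sqrt (fN α t)) * gA α t) by ring, hsc1,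
        one_mul]
      rw [div_eq_mul_inv _ t, htinv, div_eq_mul_inv (gA α t) (gB α t)]
      ring
  have hev := eventually_ge_atTop 3
  refine ⟨?_, ?_, ?_⟩
  · have h := T1.comp hcomp
    rw [show (α-1)/2 = -β by rw [hαdef]; ring] at h
    refine h.congr' ?_
    filter_upwards [hev] with m hm
    exact ((main m hm).1).symm
  · have h := T2.comp hcomp
    rw [show -((α+1)/2) = β - 1 by rw [hαdef]; ring] at h
    refine h.congr' ?_
    filter_upwards [hev] with m hm
    exact ((main m hm).2.1).symm
  · have h := T3.comp hcomp
    refine h.congr' ?_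
    filter_upwards [hev] with m hm
    exact ((main m hm).2.2).symm
end

section
/- Let $\beta \in (0, 1/2)$ satisfy $\left(\frac{\beta}{1-\beta}\right)^{\beta}\cdot\frac{(1-\beta)^2}{1-2\beta} = 1$, and set $\gamma = \frac{1-2\beta}{\beta}$. Then $\gamma > 1$ and $(1+\gamma)^{\frac{1}{2+\gamma}}\left(1+\frac{1}{1+\gamma}\right) - 1 - \frac{1}{\gamma} = 0$, and moreover $\frac{1}{2}-\beta = \frac{\gamma}{2(2+\gamma)}$. -/
set_option maxHeartbeats 1000000

open Real

theorem stmt_5 (β : ℝ) (hβ0 : 0 < β) (hβ2 : β < 1/2)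
    (hβ : (β / (1 - β)) ^ β * ((1 - β) ^ 2 / (1 - 2*β)) = 1)
    (γ : ℝ) (hγdef : γ = (1 - 2*β) / β) :
    1 < γ ∧
    (1 + γ) ^ ((1 : ℝ) / (2 + γ)) * (1 + 1 / (1 + γ)) - 1 - 1 / γ = 0 ∧
    1/2 - β = γ / (2 * (2 + γ)) := by
  have h1β : 0 < 1 - β := by linarith
  have h2β : 0 < 1 - 2*β := by linarith
  have hx : 0 < β / (1 - β) := div_pos hβ0 h1β
  -- Part 1 : β < 1/3
  have hβ3 : β < 1/3 := by
    by_contra h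
    push_neg at h
    obtain ⟨t, htdef⟩ : ∃ t : ℝ, t = 1 - 2*β := ⟨_, rfl⟩
    have ht0 : 0 < t := by rw [htdef]; linarith
    have ht3 : t ≤ 1/3 := by rw [htdef]; linarith
    have h1t : 0 < 1 - t := by linarith
    have h1t' : 0 < 1 + t := by linarith
    obtain ⟨u, hu⟩ : ∃ u : ℝ, u = t^4/(1-t) := ⟨_, rfl⟩
    have hu' : u * (1-t) = t^4 := by rw [hu]; field_simp
    -- Taylor bounds
    have e1 : -(t + t^2/2 + t^3/3) - u ≤ log (1-t) := by
      have habs : |t| < 1 := by rw [abs_of_pos ht0]; linarith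
      have hA := abs_log_sub_add_sum_range_le habs 3
      rw [abs_of_pos ht0] at hA
      simp [Finset.sum_range_succ] at hA
      rw [abs_le] at hA
      norm_num at hA
      rw [hu]
      linarith [hA.1, hA.2]
    have e2 : log (1+t) ≤ t - t^2/2 + t^3/3 + u := by
      have habs : |(-t)| < 1 := by rw [abs_neg, abs_of_pos ht0]; linarith
      have hB := abs_log_sub_add_sum_range_le habs 3
      rw [abs_neg, abs_of_pos ht0, show (1:ℝ) - -t = 1 + t by ring] at hB
      simp [Finset.sum_range_succ] at hB
      rw [abs_le] at hB
      norm_num at hB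
      rw [hu]
      linarith [hB.1, hB.2]
    have hxe : β / (1 - β) = (1-t)/(1+t) := by
      rw [htdef, show (1:ℝ)-(1-2*β) = 2*β by ring, show (1:ℝ)+(1-2*β) = 2*(1-β) by ring,
        mul_div_mul_left _ _ (two_ne_zero)]
    have hlog : log (β / (1-β)) = log (1-t) - log (1+t) := by
      rw [hxe, log_div (ne_of_gt h1t) (ne_of_gt h1t')]
    have hbt : β = (1-t)/2 := by rw [htdef]; ring
    -- key lower bound on log x * β
    have hkey : -(t - t^2 + t^3/3 + 2/3*t^4) ≤ log (β / (1-β)) * β := by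
      have hL : -2*t - 2*t^3/3 - 2*u ≤ log (β / (1-β)) := by
        rw [hlog]; linarith
      have h2 := mul_le_mul_of_nonneg_right hL hβ0.le
      have heq : (-2*t - 2*t^3/3 - 2*u) * β = -(t - t^2 + t^3/3 + 2/3*t^4) := by
        rw [hbt]
        have : u = t^4/(1-t) := hu
        field_simp
        nlinarith [hu']
      linarith [heq ▸ h2]
    have hrpow : (β / (1-β)) ^ β = exp (log (β / (1-β)) * β) := rpow_def_of_pos hx β
    have hexp : 1 - (t - t^2 + t^3/3 + 2/3*t^4) ≤ (β / (1-β)) ^ β := by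
      rw [hrpow]
      calc 1 - (t - t^2 + t^3/3 + 2/3*t^4) = -(t - t^2 + t^3/3 + 2/3*t^4) + 1 := by ring
      _ ≤ log (β / (1-β)) * β + 1 := by linarith
      _ ≤ exp (log (β / (1-β)) * β) := add_one_le_exp _
    have h1βt : 1 - β = (1+t)/2 := by rw [htdef]; ring
    have hG : (1 - β)^2 / (1 - 2*β) = (1+t)^2/(4*t) := by
      rw [h1βt, ← htdef, div_eq_div_iff (ne_of_gt ht0) (by positivity)]
      ring
    have hGpos : 0 < (1+t)^2/(4*t) := by positivity
    have hle : (1 - (t - t^2 + t^3/3 + 2/3*t^4)) * ((1+t)^2/(4*t)) ≤ 1 := by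
      calc (1 - (t - t^2 + t^3/3 + 2/3*t^4)) * ((1+t)^2/(4*t))
          ≤ (β / (1-β)) ^ β * ((1+t)^2/(4*t)) :=
            mul_le_mul_of_nonneg_right hexp hGpos.le
        _ = 1 := by rw [← hG]; exact hβ
    have h4t : (0:ℝ) < 4*t := by linarith
    have hle' : (1 - (t - t^2 + t^3/3 + 2/3*t^4)) * (1+t)^2 ≤ 4*t := by
      calc (1 - (t - t^2 + t^3/3 + 2/3*t^4)) * (1+t)^2
          = ((1 - (t - t^2 + t^3/3 + 2/3*t^4)) * ((1+t)^2/(4*t))) * (4*t) := by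
            field_simp
        _ ≤ 1 * (4*t) := mul_le_mul_of_nonneg_right hle h4t.le
        _ = 4*t := one_mul _
    have hexpand : 3 * ((1 - (t - t^2 + t^3/3 + 2/3*t^4)) * (1+t)^2)
        = 3 + 3*t + 2*t^3 - t^4 - 5*t^5 - 2*t^6 := by ring
    have ha : t^2 ≤ t/3 := by nlinarith [mul_le_mul_of_nonneg_left ht3 ht0.le]
    have hb : t^3 ≤ t/9 := by nlinarith [mul_le_mul_of_nonneg_left ha ht0.le]
    have hc : (0:ℝ) < 2 - t - 5*t^2 - 2*t^3 := by linarith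
    have hpos : 0 < t^3 * (2 - t - 5*t^2 - 2*t^3) := mul_pos (pow_pos ht0 3) hc
    have hid : t^3 * (2 - t - 5*t^2 - 2*t^3) = 2*t^3 - t^4 - 5*t^5 - 2*t^6 := by ring
    have h9 : (0:ℝ) ≤ 3 - 9*t := by linarith
    linarith [hle', hexpand]
  have hγ1 : 1 < γ := by
    rw [hγdef, lt_div_iff₀ hβ0]; linarith
  refine ⟨hγ1, ?_, ?_⟩
  · -- Part 2
    have h1γ : 1 + γ = (1-β)/β := by rw [hγdef]; field_simp; ring
    have h2γ : 2 + γ = 1/β := by rw [hγdef]; field_simp; ring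
    have hy : 0 < (1-β)/β := div_pos h1β hβ0
    have hmul : ((1-β)/β) ^ β * ((β/(1-β)) ^ β) = 1 := by
      rw [← Real.mul_rpow hy.le hx.le,
        show (1-β)/β * (β/(1-β)) = 1 by field_simp, Real.one_rpow]
    have hBC : ((1-β)/β) ^ β = (1-β)^2/(1-2*β) := by
      calc ((1-β)/β) ^ β = ((1-β)/β) ^ β * (((β/(1-β)) ^ β) * ((1-β)^2/(1-2*β))) := by
            rw [hβ, mul_one]
        _ = (((1-β)/β) ^ β * ((β/(1-β)) ^ β)) * ((1-β)^2/(1-2*β)) := by ring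
        _ = (1-β)^2/(1-2*β) := by rw [hmul, one_mul]
    rw [h1γ, h2γ, one_div_one_div, hBC, one_div_div]
    rw [hγdef, one_div_div]
    field_simp
    ring
    field_simp [show (1:ℝ) - β*2 ≠ 0 by linarith]
    ring
  · rw [hγdef]
    field_simp
    ring
end

section
/- Let $A, B, C > 0$ with $A = B + C$, and define $F(\alpha) = \frac{A}{B + C\alpha}$ for $\alpha \geq 0$. Then $F(1)=1$ and for every $\alpha \geq 0$, $|F(F(\alpha)) - 1| \leq \frac{C^2}{C^2+B^2}|\alpha - 1|$; consequently the iterates $F^n(0)$ converge to $1$ as $n\to\infty$. -/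
open Filter

theorem stmt_6 (A B C : ℝ) (hA : 0 < A) (hB : 0 < B) (hC : 0 < C)
    (hABC : A = B + C) (F : ℝ → ℝ) (hF : ∀ α : ℝ, F α = A / (B + C * α)) :
    F 1 = 1 ∧
    (∀ α : ℝ, 0 ≤ α → |F (F α) - 1| ≤ C^2 / (C^2 + B^2) * |α - 1|) ∧
    Tendsto (fun n : ℕ => F^[n] 0) atTop (nhds 1) := by
  have hBC : (0:ℝ) < C^2 + B^2 := by positivity
  have hF1 : F 1 = 1 := by rw [hF, hABC]; field_simp
  have contract : ∀ α : ℝ, 0 ≤ α → |F (F α) - 1| ≤ C^2 / (C^2 + B^2) * |α - 1| := by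
    intro α hα
    have h1 : 0 < B + C * α := by positivity
    have h2 : 0 < B * (B + C * α) + C * A := by positivity
    have key : F (F α) - 1 = C^2 * (α - 1) / (B * (B + C * α) + C * A) := by
      rw [hF, hF, hABC]
      rw [hABC] at h2
      field_simp
      ring
    rw [key, abs_div, abs_of_pos h2, abs_mul, abs_of_pos (by positivity : (0:ℝ) < C^2)]
    have hden : C^2 + B^2 ≤ B * (B + C * α) + C * A := by nlinarith [mul_nonneg (mul_nonneg hB.le hC.le) hα]
    rw [div_mul_eq_mul_div]
    gcongr
  refine ⟨hF1, contract, ?_⟩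
  have hnonneg : ∀ n : ℕ, 0 ≤ F^[n] 0 := by
    intro n
    induction n with
    | zero => simp
    | succ n ih =>
      rw [Function.iterate_succ_apply', hF]
      positivity
  set r := C^2 / (C^2 + B^2) with hr
  have hr0 : 0 ≤ r := by positivity
  have hr1 : r < 1 := by
    rw [hr, div_lt_one hBC]; nlinarith
  set M := max 1 (|F 0 - 1|) with hM
  have hbound : ∀ n : ℕ, |F^[n] 0 - 1| ≤ M * r ^ (n / 2) := by
    intro n
    induction n using Nat.strong_induction_on with
    | _ n ih =>
      match n with
      | 0 => simp [M]
      | 1 => simp [M]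
      | (n+2) =>
        have h2 : |F^[n+2] 0 - 1| ≤ r * |F^[n] 0 - 1| := by
          have := contract (F^[n] 0) (hnonneg n)
          simpa [Function.iterate_succ_apply'] using this
        calc |F^[n+2] 0 - 1| ≤ r * |F^[n] 0 - 1| := h2
          _ ≤ r * (M * r ^ (n / 2)) :=
              mul_le_mul_of_nonneg_left (ih n (by omega)) hr0
          _ = M * r ^ (n / 2 + 1) := by ring
          _ = M * r ^ ((n + 2) / 2) := by
              have hh : (n + 2) / 2 = n / 2 + 1 := by omega
              rw [hh]
  have htend0 : Tendsto (fun n : ℕ => M * r ^ (n / 2)) atTop (nhds 0) := by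
    have h1 : Tendsto (fun k : ℕ => r ^ k) atTop (nhds 0) :=
      tendsto_pow_atTop_nhds_zero_of_lt_one hr0 hr1
    have h2 : Tendsto (fun n : ℕ => n / 2) atTop atTop :=
      tendsto_atTop_atTop.mpr (fun b => ⟨2 * b, fun n hn => by omega⟩)
    have := (h1.comp h2).const_mul M
    simpa using this
  have hz : Tendsto (fun n : ℕ => F^[n] 0 - 1) atTop (nhds 0) := by
    apply squeeze_zero_norm (fun n => ?_) htend0
    simpa using hbound n
  have := hz.add_const 1
  simpa using this
end

section
/- Let $\phi:[0,1]\to\mathbb{R}_{\geq 0}$ be a $C^\infty$ function vanishing on $[0,\delta]$ for some $\delta>0$. Then there is a constant $C_\phi$ (depending only on $\phi$) such that for all integers $n \geq l \geq k \geq 1$, $\left|\sum_{j=l}^{n-1}\frac{1}{j}\phi\left(\frac{k}{j}\right) - \int_{k/n}^{k/l}\phi(x)\frac{dx}{x}\right| \leq C_\phi k^{-1}$. -/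
open Set intervalIntegral

private lemma aux_cube {x : ℝ} (hx : 1 ≤ x) : 1/x^3 ≤ 2*(1/x^2 - 1/(x+1)^2) := by
  have hx0 : (0:ℝ) < x := by linarith
  have hx1 : (0:ℝ) < x + 1 := by linarith
  have e : 2*(1/x^2 - 1/(x+1)^2) - 1/x^3 = (3*x^2 - 1)/(x^3*(x+1)^2) := by
    field_simp; ring
  have h := div_nonneg (by nlinarith : (0:ℝ) ≤ 3*x^2-1) (by positivity : (0:ℝ) ≤ x^3*(x+1)^2)
  linarith [e ▸ h]

private lemma aux_sq {x : ℝ} (hx : 1 ≤ x) : 1/x^2 ≤ 2*(1/x - 1/(x+1)) := by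
  have hx0 : (0:ℝ) < x := by linarith
  have hx1 : (0:ℝ) < x + 1 := by linarith
  have e : 2*(1/x - 1/(x+1)) - 1/x^2 = (x - 1)/(x^2*(x+1)) := by
    field_simp; ring
  have h := div_nonneg (by linarith : (0:ℝ) ≤ x - 1) (by positivity : (0:ℝ) ≤ x^2*(x+1))
  linarith [e ▸ h]

private lemma deriv_aux {φ : ℝ → ℝ} (hsmooth : ContDiff ℝ (⊤ : ℕ∞) φ) (K : ℝ) {t : ℝ} (ht : 0 < t) :
    HasDerivAt (fun s => φ (K/s) / s)
      ((deriv φ (K/t) * (K * (-(t^2)⁻¹)) * t - φ (K/t) * 1) / t^2) t := by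
  have h1 : HasDerivAt (fun s : ℝ => K / s) (K * (-(t^2)⁻¹)) t := by
    simpa [div_eq_mul_inv] using (hasDerivAt_inv ht.ne').const_mul K
  have h2 : HasDerivAt φ (deriv φ (K/t)) (K/t) :=
    ((hsmooth.differentiable (by simp)) (K/t)).hasDerivAt
  have h3 := (h2.comp t h1)
  exact h3.div (hasDerivAt_id t) ht.ne'

private lemma interval_est {φ : ℝ → ℝ} (hsmooth : ContDiff ℝ (⊤ : ℕ∞) φ) {M₀ M₁ K a : ℝ}
    (hM₀ : ∀ x ∈ Icc (0:ℝ) 1, |φ x| ≤ M₀) (hM₁ : ∀ x ∈ Icc (0:ℝ) 1, |deriv φ x| ≤ M₁)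
    (hK : 1 ≤ K) (ha : K ≤ a) :
    |φ (K/a)/a - ∫ t in a..(a+1), φ (K/t)/t| ≤ M₁*K/a^3 + M₀/a^2 := by
  have hK0 : (0:ℝ) < K := by linarith
  have ha1 : (1:ℝ) ≤ a := le_trans hK ha
  have ha0 : (0:ℝ) < a := by linarith
  set F : ℝ → ℝ := fun t => φ (K/t) / t with hF
  set G : ℝ → ℝ := fun t =>
    (deriv φ (K/t) * (K * (-(t^2)⁻¹)) * t - φ (K/t) * 1) / t^2 with hG
  set C : ℝ := M₁*K/a^3 + M₀/a^2 with hCdef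
  have hM₀0 : 0 ≤ M₀ := le_trans (abs_nonneg _) (hM₀ 0 ⟨le_refl _, zero_le_one⟩)
  have hM₁0 : 0 ≤ M₁ := le_trans (abs_nonneg _) (hM₁ 0 ⟨le_refl _, zero_le_one⟩)
  have hC0 : 0 ≤ C := by positivity
  -- derivative bound
  have bound : ∀ t ∈ Icc a (a+1), ‖G t‖ ≤ C := by
    intro t ht
    have ht0 : (0:ℝ) < t := lt_of_lt_of_le ha0 ht.1
    have hKt : K/t ∈ Icc (0:ℝ) 1 := by
      constructor
      · positivity
      · rw [div_le_one ht0]; linarith [ht.1]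
    have b1 : |deriv φ (K/t)| ≤ M₁ := hM₁ _ hKt
    have b0 : |φ (K/t)| ≤ M₀ := hM₀ _ hKt
    have key : G t = (deriv φ (K/t) * K * t + φ (K/t) * t^2) / t^4 * (-1) := by
      rw [hG]; field_simp; ring
    have e1 : |G t| ≤ |deriv φ (K/t)| * K * t / t^4 + |φ (K/t)| * t^2 / t^4 := by
      rw [key, abs_mul, abs_neg, abs_one, mul_one, abs_div,
        abs_of_pos (by positivity : (0:ℝ) < t^4)]
      calc |deriv φ (K/t) * K * t + φ (K/t) * t^2| / t^4
          ≤ (|deriv φ (K/t) * K * t| + |φ (K/t) * t^2|) / t^4 := by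
            gcongr
            exact abs_add_le _ _
        _ = |deriv φ (K/t)| * K * t / t^4 + |φ (K/t)| * t^2 / t^4 := by
            rw [abs_mul, abs_mul, abs_mul, abs_of_pos hK0, abs_of_pos ht0,
              abs_of_pos (by positivity : (0:ℝ) < t^2), add_div]
    have e2 : |deriv φ (K/t)| * K * t / t^4 ≤ M₁ * K / a^3 := by
      have : |deriv φ (K/t)| * K * t / t^4 = |deriv φ (K/t)| * K / t^3 := by
        field_simp
      rw [this]
      gcongr
      exact ht.1
    have e3 : |φ (K/t)| * t^2 / t^4 ≤ M₀ / a^2 := by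
      have : |φ (K/t)| * t^2 / t^4 = |φ (K/t)| / t^2 := by
        field_simp
      rw [this]
      gcongr
      exact ht.1
    have : ‖G t‖ = |G t| := rfl
    rw [this]
    calc |G t| ≤ _ := e1
      _ ≤ M₁ * K / a^3 + M₀ / a^2 := add_le_add e2 e3
  -- MVT / Lipschitz bound
  have lip : ∀ t ∈ Icc a (a+1), |F a - F t| ≤ C := by
    intro t ht
    have hmvt := (convex_Icc a (a+1)).norm_image_sub_le_of_norm_hasDerivWithin_le
      (f := F) (f' := G)
      (fun x hx => (deriv_aux hsmooth K (lt_of_lt_of_le ha0 hx.1)).hasDerivWithinAt)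
      bound ht (left_mem_Icc.mpr (by linarith))
    have h1 : ‖a - t‖ ≤ 1 := by
      rw [Real.norm_eq_abs, abs_le]
      constructor <;> [linarith [ht.2]; linarith [ht.1]]
    calc |F a - F t| = ‖F a - F t‖ := rfl
      _ ≤ C * ‖a - t‖ := hmvt
      _ ≤ C * 1 := by gcongr
      _ = C := mul_one C
  -- integrability
  have hFc : ContinuousOn F (uIcc a (a+1)) := by
    intro t ht
    rw [uIcc_of_le (by linarith : a ≤ a + 1)] at ht
    have ht0 : (0:ℝ) < t := lt_of_lt_of_le ha0 ht.1
    exact ((hsmooth.continuous.continuousAt.comp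
      ((continuousAt_const.div continuousAt_id ht0.ne').congr (by rfl))).div
      continuousAt_id ht0.ne').continuousWithinAt
  have hint : IntervalIntegrable F MeasureTheory.volume a (a+1) := hFc.intervalIntegrable
  have key : F a - ∫ t in a..(a+1), F t = ∫ t in a..(a+1), (F a - F t) := by
    rw [integral_sub (intervalIntegrable_const) hint, integral_const]
    simp
  calc |φ (K/a)/a - ∫ t in a..(a+1), φ (K/t)/t|
      = |∫ t in a..(a+1), (F a - F t)| := by rw [← key]
    _ = ‖∫ t in a..(a+1), (F a - F t)‖ := rfl
    _ ≤ C * |a + 1 - a| := intervalIntegral.norm_integral_le_of_norm_le_const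
        (fun t ht => lip t (Ioc_subset_Icc_self ((uIoc_of_le (by linarith : a ≤ a+1)) ▸ ht)))
    _ = C := by rw [show a + 1 - a = (1:ℝ) by ring, abs_one, mul_one]

theorem stmt_7 (φ : ℝ → ℝ) (hsmooth : ContDiff ℝ (⊤ : ℕ∞) φ)
    (hnonneg : ∀ x ∈ Set.Icc (0:ℝ) 1, 0 ≤ φ x)
    (δ : ℝ) (hδ : 0 < δ) (hvanish : ∀ x ∈ Set.Icc (0:ℝ) δ, φ x = 0) :
    ∃ Cφ : ℝ, ∀ n l k : ℕ, 1 ≤ k → k ≤ l → l ≤ n →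
      |(∑ j ∈ Finset.Icc l (n-1), (1 / (j:ℝ)) * φ ((k:ℝ) / (j:ℝ)))
        - ∫ x in ((k:ℝ)/(n:ℝ))..((k:ℝ)/(l:ℝ)), φ x / x| ≤ Cφ / (k:ℝ) := by
  obtain ⟨M₀, hM₀'⟩ := (isCompact_Icc (a := (0:ℝ)) (b := 1)).exists_bound_of_continuousOn
    hsmooth.continuous.continuousOn
  obtain ⟨M₁, hM₁'⟩ := (isCompact_Icc (a := (0:ℝ)) (b := 1)).exists_bound_of_continuousOn
    ((hsmooth.continuous_deriv (by simp)).continuousOn)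
  have hM₀ : ∀ x ∈ Icc (0:ℝ) 1, |φ x| ≤ M₀ := fun x hx => (Real.norm_eq_abs (φ x)) ▸ hM₀' x hx
  have hM₁ : ∀ x ∈ Icc (0:ℝ) 1, |deriv φ x| ≤ M₁ :=
    fun x hx => (Real.norm_eq_abs (deriv φ x)) ▸ hM₁' x hx
  have hM₀0 : 0 ≤ M₀ := le_trans (abs_nonneg _) (hM₀ 0 ⟨le_refl _, zero_le_one⟩)
  have hM₁0 : 0 ≤ M₁ := le_trans (abs_nonneg _) (hM₁ 0 ⟨le_refl _, zero_le_one⟩)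
  refine ⟨2*M₁ + 2*M₀, ?_⟩
  intro n l k hk hkl hln
  set K : ℝ := (k:ℝ) with hKdef
  have hK1 : (1:ℝ) ≤ K := by rw [hKdef]; exact_mod_cast hk
  have hK0 : (0:ℝ) < K := by linarith
  have hKl : K ≤ (l:ℝ) := by rw [hKdef]; exact_mod_cast hkl
  have hln' : (l:ℝ) ≤ (n:ℝ) := by exact_mod_cast hln
  have hl1 : (1:ℝ) ≤ (l:ℝ) := le_trans hK1 hKl
  have hl0 : (0:ℝ) < (l:ℝ) := by linarith
  have hl1' : 1 ≤ l := by exact_mod_cast hl1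
  -- rewrite the sum
  have hsum : (∑ j ∈ Finset.Icc l (n-1), (1 / (j:ℝ)) * φ (K / (j:ℝ)))
      = ∑ i ∈ Finset.range (n-l), φ (K/((l:ℝ)+i)) / ((l:ℝ)+i) := by
    rw [← Finset.Ico_add_one_right_eq_Icc, Finset.sum_Ico_eq_sum_range]
    have h2 : n - 1 + 1 - l = n - l := by omega
    rw [h2]
    apply Finset.sum_congr rfl
    intro i _
    push_cast
    ring
  -- change of variables
  have huIcc : uIcc (n:ℝ) (l:ℝ) = Icc (l:ℝ) (n:ℝ) := uIcc_of_ge hln'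
  have hfc : ContinuousOn (fun t : ℝ => K/t) (uIcc (n:ℝ) (l:ℝ)) := by
    rw [huIcc]
    intro t ht
    exact (continuousAt_const.div continuousAt_id
      (ne_of_gt (lt_of_lt_of_le hl0 ht.1))).continuousWithinAt
  have hff' : ∀ x ∈ Ioo (min (n:ℝ) (l:ℝ)) (max (n:ℝ) (l:ℝ)),
      HasDerivWithinAt (fun t : ℝ => K/t) (K * (-(x^2)⁻¹)) (Ioi x) x := by
    intro x hx
    rw [min_eq_right hln', max_eq_left hln'] at hx
    have hx0 : (0:ℝ) < x := lt_trans hl0 hx.1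
    have : HasDerivAt (fun t : ℝ => K/t) (K * (-(x^2)⁻¹)) x := by
      simpa [div_eq_mul_inv] using (hasDerivAt_inv hx0.ne').const_mul K
    exact this.hasDerivWithinAt
  have hf'c : ContinuousOn (fun t : ℝ => K * (-(t^2)⁻¹)) (uIcc (n:ℝ) (l:ℝ)) := by
    rw [huIcc]
    intro t ht
    have ht0 : t ≠ 0 := ne_of_gt (lt_of_lt_of_le hl0 ht.1)
    exact (continuousAt_const.mul
      (((continuousAt_id.pow 2).inv₀ (pow_ne_zero 2 ht0)).neg)).continuousWithinAt
  have hgc : ContinuousOn (fun x : ℝ => φ x / x) ((fun t : ℝ => K/t) '' uIcc (n:ℝ) (l:ℝ)) := by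
    have hsub : (fun t : ℝ => K/t) '' uIcc (n:ℝ) (l:ℝ) ⊆ Ioi 0 := by
      rw [huIcc]
      rintro _ ⟨t, ht, rfl⟩
      exact div_pos hK0 (lt_of_lt_of_le hl0 ht.1)
    exact ((hsmooth.continuous.continuousOn).div continuousOn_id
      (fun x hx => ne_of_gt hx)).mono hsub
  have hcov0 := integral_comp_smul_deriv'' hfc hff' hf'c hgc
  have hLHS : (∫ x in (n:ℝ)..(l:ℝ), (K * (-(x^2)⁻¹)) • ((fun x : ℝ => φ x / x) ∘ fun t => K/t) x)
      = ∫ x in (n:ℝ)..(l:ℝ), -(φ (K/x)/x) := by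
    apply integral_congr
    intro x hx
    rw [huIcc] at hx
    have hx0 : (0:ℝ) < x := lt_of_lt_of_le hl0 hx.1
    simp only [Function.comp, smul_eq_mul]
    field_simp
  have hcov : (∫ x in (K/(n:ℝ))..(K/(l:ℝ)), φ x / x) = ∫ t in (l:ℝ)..(n:ℝ), φ (K/t)/t := by
    rw [← hcov0, hLHS, integral_neg, integral_symm (l:ℝ) (n:ℝ), neg_neg]
  -- adjacent intervals
  have hcont : ∀ a b : ℝ, (0:ℝ) < a → ContinuousOn (fun t : ℝ => φ (K/t)/t) (uIcc a b) →
      True := fun _ _ _ _ => trivial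
  have hadj : (∑ i ∈ Finset.range (n-l), ∫ t in ((l:ℝ)+i)..((l:ℝ)+i+1), φ (K/t)/t)
      = ∫ t in (l:ℝ)..(n:ℝ), φ (K/t)/t := by
    have h := intervalIntegral.sum_integral_adjacent_intervals (μ := MeasureTheory.volume)
      (a := fun i : ℕ => (l:ℝ) + i) (n := n - l) (f := fun t => φ (K/t)/t) ?_
    · calc ∑ i ∈ Finset.range (n-l), (∫ t in ((l:ℝ)+i)..((l:ℝ)+i+1), φ (K/t)/t)
          = ∑ i ∈ Finset.range (n-l), ∫ t in ((l:ℝ)+i)..((l:ℝ)+((i+1:ℕ):ℝ)), φ (K/t)/t := by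
            apply Finset.sum_congr rfl
            intro i _
            congr 1
            push_cast
            ring
        _ = ∫ t in ((l:ℝ)+((0:ℕ):ℝ))..((l:ℝ)+((n-l : ℕ):ℝ)), φ (K/t)/t := h
        _ = ∫ t in (l:ℝ)..(n:ℝ), φ (K/t)/t := by
            congr 1
            · simp
            · rw [Nat.cast_sub hln]; ring
    · intro i _
      apply ContinuousOn.intervalIntegrable
      intro t ht
      have hle : (l:ℝ)+(i:ℝ) ≤ (l:ℝ)+((i+1:ℕ):ℝ) := by push_cast; linarith
      rw [uIcc_of_le hle] at ht
      have hi0 : (0:ℝ) ≤ (i:ℝ) := Nat.cast_nonneg i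
      have ht0 : (0:ℝ) < t := lt_of_lt_of_le (by linarith) ht.1
      exact ((hsmooth.continuous.continuousAt.comp
        (continuousAt_const.div continuousAt_id ht0.ne')).div
        continuousAt_id ht0.ne').continuousWithinAt
  -- combine
  have hcomb : (∑ j ∈ Finset.Icc l (n-1), (1 / (j:ℝ)) * φ (K / (j:ℝ)))
        - (∫ x in (K/(n:ℝ))..(K/(l:ℝ)), φ x / x)
      = ∑ i ∈ Finset.range (n-l),
          (φ (K/((l:ℝ)+i)) / ((l:ℝ)+i) - ∫ t in ((l:ℝ)+i)..((l:ℝ)+i+1), φ (K/t)/t) := by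
    rw [hsum, hcov, ← hadj, Finset.sum_sub_distrib]
  set u : ℕ → ℝ := fun i => 1/((l:ℝ)+i)^2 with hu
  set v : ℕ → ℝ := fun i => 1/((l:ℝ)+i) with hv
  calc |(∑ j ∈ Finset.Icc l (n-1), (1 / (j:ℝ)) * φ (K / (j:ℝ)))
        - ∫ x in (K/(n:ℝ))..(K/(l:ℝ)), φ x / x|
      = |∑ i ∈ Finset.range (n-l),
          (φ (K/((l:ℝ)+i)) / ((l:ℝ)+i) - ∫ t in ((l:ℝ)+i)..((l:ℝ)+i+1), φ (K/t)/t)| := by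
        rw [hcomb]
    _ ≤ ∑ i ∈ Finset.range (n-l),
          |φ (K/((l:ℝ)+i)) / ((l:ℝ)+i) - ∫ t in ((l:ℝ)+i)..((l:ℝ)+i+1), φ (K/t)/t| :=
        Finset.abs_sum_le_sum_abs _ _
    _ ≤ ∑ i ∈ Finset.range (n-l), (M₁*K/((l:ℝ)+i)^3 + M₀/((l:ℝ)+i)^2) := by
        apply Finset.sum_le_sum
        intro i _
        have hi0 : (0:ℝ) ≤ (i:ℝ) := Nat.cast_nonneg i
        exact interval_est hsmooth hM₀ hM₁ hK1 (by linarith)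
    _ ≤ ∑ i ∈ Finset.range (n-l),
          (2*(M₁*K)*(u i - u (i+1)) + 2*M₀*(v i - v (i+1))) := by
        apply Finset.sum_le_sum
        intro i _
        have hi0 : (0:ℝ) ≤ (i:ℝ) := Nat.cast_nonneg i
        have hx1 : (1:ℝ) ≤ (l:ℝ)+i := by linarith
        have hcube := aux_cube hx1
        have hsq := aux_sq hx1
        have hu1 : u (i+1) = 1/(((l:ℝ)+i)+1)^2 := by rw [hu]; push_cast; ring_nf
        have hv1 : v (i+1) = 1/(((l:ℝ)+i)+1) := by rw [hv]; push_cast; ring_nf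
        have h1 : M₁*K/((l:ℝ)+i)^3 ≤ 2*(M₁*K)*(u i - u (i+1)) := by
          rw [hu1, hu, div_eq_mul_one_div]
          calc (M₁*K)*(1/((l:ℝ)+i)^3)
              ≤ (M₁*K)*(2*(1/((l:ℝ)+i)^2 - 1/(((l:ℝ)+i)+1)^2)) :=
                mul_le_mul_of_nonneg_left hcube (by positivity)
            _ = 2*(M₁*K)*(1/((l:ℝ)+i)^2 - 1/(((l:ℝ)+i)+1)^2) := by ring
        have h2 : M₀/((l:ℝ)+i)^2 ≤ 2*M₀*(v i - v (i+1)) := by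
          rw [hv1, hv, div_eq_mul_one_div]
          calc M₀*(1/((l:ℝ)+i)^2)
              ≤ M₀*(2*(1/((l:ℝ)+i) - 1/(((l:ℝ)+i)+1))) :=
                mul_le_mul_of_nonneg_left hsq hM₀0
            _ = 2*M₀*(1/((l:ℝ)+i) - 1/(((l:ℝ)+i)+1)) := by ring
        linarith
    _ = 2*(M₁*K)*(u 0 - u (n-l)) + 2*M₀*(v 0 - v (n-l)) := by
        rw [Finset.sum_add_distrib, ← Finset.mul_sum, ← Finset.mul_sum,
          Finset.sum_range_sub' u, Finset.sum_range_sub' v]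
    _ ≤ 2*(M₁*K)*(u 0) + 2*M₀*(v 0) := by
        have hu0 : 0 ≤ u (n-l) := by rw [hu]; positivity
        have hv0 : 0 ≤ v (n-l) := by
          rw [hv]
          have : (0:ℝ) ≤ ((n-l : ℕ):ℝ) := Nat.cast_nonneg _
          positivity
        nlinarith [mul_nonneg (mul_nonneg hM₁0 hK0.le) hu0, mul_nonneg hM₀0 hv0]
    _ = 2*M₁*(K/(l:ℝ)^2) + 2*M₀*(1/(l:ℝ)) := by
        rw [hu, hv]
        push_cast
        ring
    _ ≤ 2*M₁*(1/K) + 2*M₀*(1/K) := by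
        have e1 : K/(l:ℝ)^2 ≤ 1/K := by
          rw [div_le_div_iff₀ (by positivity) hK0]
          nlinarith
        have e2 : 1/(l:ℝ) ≤ 1/K := one_div_le_one_div_of_le hK0 hKl
        have := mul_le_mul_of_nonneg_left e1 (by linarith : (0:ℝ) ≤ 2*M₁)
        have := mul_le_mul_of_nonneg_left e2 (by linarith : (0:ℝ) ≤ 2*M₀)
        linarith
    _ = (2*M₁ + 2*M₀)/K := by ring
end

section
/- Let $H$ be a Hilbert space, let $(d_n)$, $(r_n)$, $(h_n)$ be sequences in $H$ and $(q_n)$, $(\gamma_n)$, $(\xi_n)$ positive reals with $r_n = r_{n-1} - q_n d_n$, $d_n = \gamma_n r_{n-1} + h_n + \xi_n e_n$ for orthonormal $(e_n)$, with $h_n, r_{n-1} \in \mathrm{span}(e_1,\dots,e_{n-1})$ and $\gamma_n = q_n^{-1} - q_{n-1}^{-1}$. Then $r_m = \frac{q_m}{q_{m-1}} r_{m-1} - q_m h_m - q_m \xi_m e_m$ for all $m$, and for $k < n$ with $\langle r_k, d_k\rangle = 0$, $\langle r_{n-1}, d_k\rangle = -q_{n-1}\sum_{i=k+1}^{n-1}\langle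 h_i, d_k\rangle$. -/
theorem stmt_9 {H : Type*} [NormedAddCommGroup H] [InnerProductSpace ℝ H]
    (e : ℕ → H) (he : Orthonormal ℝ e)
    (r d h : ℕ → H) (q γ ξ : ℕ → ℝ)
    (hqpos : ∀ n, 0 < q n) (hγpos : ∀ n, 1 ≤ n → 0 < γ n)
    (hξpos : ∀ n, 1 ≤ n → 0 < ξ n)
    (hr : ∀ n, 1 ≤ n → r n = r (n-1) - q n • d n)
    (hd : ∀ n, 1 ≤ n → d n = γ n • r (n-1) + h n + ξ n • e n)
    (hγ : ∀ n, 1 ≤ n → γ n = (q n)⁻¹ - (q (n-1))⁻¹)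
    (hh : ∀ n, 1 ≤ n → h n ∈ Submodule.span ℝ (e '' Set.Ico 1 n))
    (hrspan : ∀ n, 1 ≤ n → r (n-1) ∈ Submodule.span ℝ (e '' Set.Ico 1 n)) :
    (∀ m : ℕ, 1 ≤ m →
      r m = (q m / q (m-1)) • r (m-1) - q m • h m - (q m * ξ m) • e m)
    ∧ (∀ k n : ℕ, 1 ≤ k → k < n → (inner ℝ (r k) (d k) : ℝ) = 0 →
        (inner ℝ (r (n-1)) (d k) : ℝ)
          = -(q (n-1)) * ∑ i ∈ Finset.Icc (k+1) (n-1), (inner ℝ (h i) (d k) : ℝ)) := by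
  have hq0 : ∀ n, q n ≠ 0 := fun n => (hqpos n).ne'
  have part1 : ∀ m : ℕ, 1 ≤ m →
      r m = (q m / q (m-1)) • r (m-1) - q m • h m - (q m * ξ m) • e m := by
    intro m hm
    rw [hr m hm, hd m hm, hγ m hm]
    match_scalars <;> field_simp [hq0 m, hq0 (m-1)] <;> ring
  refine ⟨part1, ?_⟩
  intro k n hk hkn h0
  have hdk : d k ∈ Submodule.span ℝ (e '' Set.Ico 1 (k+1)) := by
    rw [hd k hk]
    have h1 : Submodule.span ℝ (e '' Set.Ico 1 k) ≤ Submodule.span ℝ (e '' Set.Ico 1 (k+1)) :=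
      Submodule.span_mono (Set.image_mono (Set.Ico_subset_Ico_right (Nat.le_succ k)))
    refine Submodule.add_mem _ (Submodule.add_mem _ ?_ (h1 (hh k hk))) ?_
    · exact Submodule.smul_mem _ _ (h1 (hrspan k hk))
    · exact Submodule.smul_mem _ _ (Submodule.subset_span ⟨k, ⟨hk, Nat.lt_succ_self k⟩, rfl⟩)
  have horth : ∀ m, k < m → (inner ℝ (e m) (d k) : ℝ) = 0 := by
    intro m hm
    have hle : Submodule.span ℝ (e '' Set.Ico 1 (k+1)) ≤
        LinearMap.ker ((innerSL ℝ (e m) : H →L[ℝ] ℝ) : H →ₗ[ℝ] ℝ) := by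
      rw [Submodule.span_le]
      rintro x ⟨j, ⟨hj1, hj2⟩, rfl⟩
      have : (inner ℝ (e m) (e j) : ℝ) = 0 := by
        rw [orthonormal_iff_ite.mp he]
        simp only [ite_eq_right_iff]
        intro hmj; omega
      simpa [LinearMap.mem_ker] using this
    have := hle hdk
    simpa [LinearMap.mem_ker] using this
  have main : ∀ n, k + 1 ≤ n → (inner ℝ (r (n-1)) (d k) : ℝ)
      = -(q (n-1)) * ∑ i ∈ Finset.Icc (k+1) (n-1), (inner ℝ (h i) (d k) : ℝ) := by
    intro n hn
    induction n, hn using Nat.le_induction with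
    | base =>
      simp only [Nat.add_sub_cancel]
      rw [h0, Finset.Icc_eq_empty (by omega), Finset.sum_empty]
      ring
    | succ n hn IH =>
      simp only [Nat.add_sub_cancel]
      have hn1 : 1 ≤ n := le_trans hk (Nat.le_of_succ_le hn)
      rw [part1 n hn1, inner_sub_left, inner_sub_left, real_inner_smul_left,
        real_inner_smul_left, real_inner_smul_left, IH, horth n (by omega)]
      obtain ⟨m, rfl⟩ : ∃ m, n = m + 1 := ⟨n - 1, by omega⟩
      rw [Finset.sum_Icc_succ_top (by omega : k + 1 ≤ m + 1)]
      simp only [Nat.add_sub_cancel]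
      field_simp [hq0 m]
      ring
  exact main n hkn
end

section
/- Let $H$ be a Hilbert space, $(e_n)$ an orthonormal sequence, and suppose sequences $(r_n)_{n\geq K-1}$, $(d_n)$, $(h_n)$, $(q_n>0)$, $(\xi_n)$ satisfy $r_n = r_{n-1} - q_n d_n$, $d_n = \gamma_n r_{n-1} + h_n + \xi_n e_n$, $\gamma_n = q_n^{-1}-q_{n-1}^{-1}$, with $r_{K-1}, h_n \in \mathrm{span}(e_1,\dots,e_{n-1})$. Then for all $K \leq k \leq n$: $\langle r_n, e_k\rangle = -q_n\left(\xi_k + \sum_{j=k+1}^{n}\langle h_j, e_k\rangle\right)$. -/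
private lemma span_orth_aux {H : Type*} [NormedAddCommGroup H] [InnerProductSpace ℝ H]
    (e : ℕ → H) (he : Orthonormal ℝ e) {m k : ℕ} (hk : m ≤ k)
    {v : H} (hv : v ∈ Submodule.span ℝ (e '' Set.Ico 1 m)) :
    (inner ℝ v (e k) : ℝ) = 0 := by
  induction hv using Submodule.span_induction with
  | mem x hx =>
      obtain ⟨j, hj, rfl⟩ := hx
      have hjk : j ≠ k := by
        rcases hj with ⟨h1, h2⟩; omega
      exact he.2 hjk
  | zero => simp
  | add x y _ _ hx hy => rw [inner_add_left, hx, hy]; ring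
  | smul a x _ hx => rw [real_inner_smul_left, hx]; ring

theorem stmt_10 {H : Type*} [NormedAddCommGroup H] [InnerProductSpace ℝ H]
    (e : ℕ → H) (he : Orthonormal ℝ e)
    (K : ℕ) (hK : 1 ≤ K)
    (r d h : ℕ → H) (q γ ξ : ℕ → ℝ)
    (hqpos : ∀ n, 0 < q n)
    (hr : ∀ n, K ≤ n → r n = r (n-1) - q n • d n)
    (hd : ∀ n, K ≤ n → d n = γ n • r (n-1) + h n + ξ n • e n)
    (hγ : ∀ n, K ≤ n → γ n = (q n)⁻¹ - (q (n-1))⁻¹)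
    (hh : ∀ n, K ≤ n → h n ∈ Submodule.span ℝ (e '' Set.Ico 1 n))
    (hrK : r (K-1) ∈ Submodule.span ℝ (e '' Set.Ico 1 K)) :
    ∀ k n : ℕ, K ≤ k → k ≤ n →
      (inner ℝ (r n) (e k) : ℝ)
        = -(q n) * (ξ k + ∑ j ∈ Finset.Icc (k+1) n, (inner ℝ (h j) (e k) : ℝ)) := by
  have hite : ∀ i j, (inner ℝ (e i) (e j) : ℝ) = if i = j then 1 else 0 :=
    orthonormal_iff_ite.mp he
  -- key expansion of ⟨r n, e k⟩ for K ≤ n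
  have hexp : ∀ n, K ≤ n → ∀ k : ℕ,
      (inner ℝ (r n) (e k) : ℝ) =
        (q n / q (n-1)) * (inner ℝ (r (n-1)) (e k) : ℝ)
          - q n * (inner ℝ (h n) (e k) : ℝ)
          - q n * ξ n * (inner ℝ (e n) (e k) : ℝ) := by
    intro n hn k
    rw [hr n hn, hd n hn]
    rw [inner_sub_left, real_inner_smul_left, inner_add_left, inner_add_left,
      real_inner_smul_left, real_inner_smul_left, hγ n hn]
    have h1 : q n ≠ 0 := (hqpos n).ne'
    have h2 : q (n-1) ≠ 0 := (hqpos (n-1)).ne'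
    field_simp
    ring
  -- orthogonality: ⟨r n, e k⟩ = 0 for k > n ≥ K-1
  have horth : ∀ n, K - 1 ≤ n → ∀ k, n < k → (inner ℝ (r n) (e k) : ℝ) = 0 := by
    intro n hn
    induction n, hn using Nat.le_induction with
    | base =>
        intro k hk
        exact span_orth_aux e he (by omega) hrK
    | succ n hn ih =>
        intro k hk
        have hKn : K ≤ n + 1 := by omega
        rw [hexp (n+1) hKn k]
        have h1 : (inner ℝ (r (n+1-1)) (e k) : ℝ) = 0 := by
          simpa using ih k (by omega)
        have h2 : (inner ℝ (h (n+1)) (e k) : ℝ) =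
            0 := span_orth_aux e he (by omega) (hh (n+1) hKn)
        have h3 : (inner ℝ (e (n+1)) (e k) : ℝ) = 0 := by
          rw [hite]; simp [show n + 1 ≠ k by omega]
        simp only [Nat.add_sub_cancel] at h1 ⊢
        rw [h1, h2, h3]; ring
  intro k n hKk hkn
  induction n, hkn using Nat.le_induction with
  | base =>
      have hKk' : K ≤ k := hKk
      rw [hexp k hKk' k]
      have h1 : (inner ℝ (r (k-1)) (e k) : ℝ) = 0 := horth (k-1) (by omega) k (by omega)
      have h2 : (inner ℝ (h k) (e k) : ℝ) = 0 :=
        span_orth_aux e he le_rfl (hh k hKk')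
      have h3 : (inner ℝ (e k) (e k) : ℝ) = 1 := by rw [hite]; simp
      rw [h1, h2, h3]
      simp [Finset.Icc_self, Finset.Icc_eq_empty_of_lt]
  | succ n hn ih =>
      have hKn : K ≤ n + 1 := by omega
      rw [hexp (n+1) hKn k]
      have h3 : (inner ℝ (e (n+1)) (e k) : ℝ) = 0 := by
        rw [hite]; simp [show n + 1 ≠ k by omega]
      simp only [Nat.add_sub_cancel]
      rw [ih, h3, Finset.sum_Icc_succ_top (by omega : k + 1 ≤ n + 1)]
      have h1 : q n ≠ 0 := (hqpos n).ne'
      field_simp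
      ring
end

section
/- There exists a unique $\beta^* \in (0,1/2)$ such that $\left(\frac{\beta}{1-\beta}\right)^{\beta}\cdot\frac{(1-\beta)^2}{1-2\beta} < 1$ holds for all $\beta \in (0,\beta^*)$ and fails for $\beta \in (\beta^*, 1/2)$; moreover $\beta^* \in (0.31, 0.32)$. -/
open Set Real

noncomputable def fMP (x : ℝ) : ℝ :=
  x * Real.log (x / (1 - x)) + (2 * Real.log (1 - x) - Real.log (1 - 2 * x))

noncomputable def fMP' (x : ℝ) : ℝ :=
  Real.log (x / (1 - x)) - 1 / (1 - x) + 2 / (1 - 2 * x)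

noncomputable def fMP'' (x : ℝ) : ℝ :=
  (1 - 2 * x) / (x * (1 - x) ^ 2) + 4 / (1 - 2 * x) ^ 2

lemma aux_ne (x : ℝ) (hx : x ∈ Ioo (0:ℝ) (1/2)) :
    x ≠ 0 ∧ (1 - x) ≠ 0 ∧ (1 - 2 * x) ≠ 0 := by
  obtain ⟨h0, h2⟩ := hx
  refine ⟨ne_of_gt h0, ?_, ?_⟩ <;> nlinarith

lemma hasDerivAt_fMP (x : ℝ) (hx : x ∈ Ioo (0:ℝ) (1/2)) :
    HasDerivAt fMP (fMP' x) x := by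
  obtain ⟨hx0, h1x, h2x⟩ := aux_ne x hx
  have hd1 : HasDerivAt (fun y : ℝ => y / (1 - y)) (1 / (1 - x) ^ 2) x := by
    have := (hasDerivAt_id x).div ((hasDerivAt_const x (1:ℝ)).sub (hasDerivAt_id x)) h1x
    refine this.congr_deriv ?_
    simp only [Pi.sub_apply, id]
    field_simp
    ring
  have hd2 : HasDerivAt (fun y : ℝ => Real.log (y / (1 - y))) (1 / (x * (1 - x))) x := by
    have := hd1.log (div_ne_zero hx0 h1x)
    refine this.congr_deriv ?_
    field_simp
  have hd3 : HasDerivAt (fun y : ℝ => Real.log (1 - y)) (-(1 / (1 - x))) x := by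
    have := (((hasDerivAt_const x (1:ℝ)).sub (hasDerivAt_id x))).log h1x
    refine this.congr_deriv ?_
    simp only [Pi.sub_apply, id]
    field_simp
    ring
  have hd4 : HasDerivAt (fun y : ℝ => Real.log (1 - 2 * y)) (-(2 / (1 - 2 * x))) x := by
    have := (((hasDerivAt_const x (1:ℝ)).sub ((hasDerivAt_id x).const_mul 2))).log h2x
    refine this.congr_deriv ?_
    simp only [Pi.sub_apply, id]
    field_simp
    ring
  have := ((hasDerivAt_id x).mul hd2).add ((hd3.const_mul 2).sub hd4)
  refine this.congr_deriv ?_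
  unfold fMP'
  simp only [id]
  field_simp
  ring

lemma hasDerivAt_fMP' (x : ℝ) (hx : x ∈ Ioo (0:ℝ) (1/2)) :
    HasDerivAt fMP' (fMP'' x) x := by
  obtain ⟨hx0, h1x, h2x⟩ := aux_ne x hx
  have hd1 : HasDerivAt (fun y : ℝ => y / (1 - y)) (1 / (1 - x) ^ 2) x := by
    have := (hasDerivAt_id x).div ((hasDerivAt_const x (1:ℝ)).sub (hasDerivAt_id x)) h1x
    refine this.congr_deriv ?_
    simp only [Pi.sub_apply, id]
    field_simp
    ring
  have hd2 : HasDerivAt (fun y : ℝ => Real.log (y / (1 - y))) (1 / (x * (1 - x))) x := by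
    have := hd1.log (div_ne_zero hx0 h1x)
    refine this.congr_deriv ?_
    field_simp
  have hd5 : HasDerivAt (fun y : ℝ => 1 / (1 - y)) (1 / (1 - x) ^ 2) x := by
    have := ((hasDerivAt_const x (1:ℝ)).sub (hasDerivAt_id x)).inv h1x
    have h2 : HasDerivAt (fun y : ℝ => (1 - y)⁻¹) (1 / (1 - x) ^ 2) x := by
      refine this.congr_deriv ?_
      simp only [Pi.sub_apply, id]
      field_simp
      ring
    convert h2 using 1
    funext y
    rw [one_div]
  have hd6 : HasDerivAt (fun y : ℝ => 2 / (1 - 2 * y)) (4 / (1 - 2 * x) ^ 2) x := by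
    have := (((hasDerivAt_const x (1:ℝ)).sub ((hasDerivAt_id x).const_mul 2)).inv h2x).const_mul 2
    have h2 : HasDerivAt (fun y : ℝ => 2 * (1 - 2 * y)⁻¹) (4 / (1 - 2 * x) ^ 2) x := by
      refine this.congr_deriv ?_
      simp only [Pi.sub_apply, id]
      field_simp
      try norm_num
    convert h2 using 1
    funext y
    rw [div_eq_mul_inv]
  have := (hd2.sub hd5).add hd6
  refine this.congr_deriv ?_
  unfold fMP''
  congr 1
  field_simp
  ring

lemma contOn_fMP : ContinuousOn fMP (Ioo (0:ℝ) (1/2)) :=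
  fun x hx => (hasDerivAt_fMP x hx).continuousAt.continuousWithinAt

lemma convexOn_fMP : ConvexOn ℝ (Ioo (0:ℝ) (1/2)) fMP := by
  have hInt : interior (Ioo (0:ℝ) (1/2)) = Ioo (0:ℝ) (1/2) := interior_Ioo
  have hEq : Set.EqOn (deriv fMP) fMP' (Ioo (0:ℝ) (1/2)) :=
    fun x hx => (hasDerivAt_fMP x hx).deriv
  apply convexOn_of_deriv2_nonneg (convex_Ioo _ _) contOn_fMP
  · rw [hInt]
    exact fun x hx => (hasDerivAt_fMP x hx).differentiableAt.differentiableWithinAt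
  · rw [hInt]
    intro x hx
    have hev : deriv fMP =ᶠ[nhds x] fMP' :=
      Filter.eventuallyEq_of_mem (isOpen_Ioo.mem_nhds hx) hEq
    exact ((hev.differentiableAt_iff).mpr
      (hasDerivAt_fMP' x hx).differentiableAt).differentiableWithinAt
  · rw [hInt]
    intro x hx
    have hev : deriv fMP =ᶠ[nhds x] fMP' :=
      Filter.eventuallyEq_of_mem (isOpen_Ioo.mem_nhds hx) hEq
    have h2 : deriv (deriv fMP) x = fMP'' x := by
      rw [hev.deriv_eq]
      exact (hasDerivAt_fMP' x hx).deriv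
    have : deriv^[2] fMP x = deriv (deriv fMP) x := rfl
    rw [this, h2]
    obtain ⟨hx0, hx2⟩ := hx
    unfold fMP''
    have h1 : (0:ℝ) < 1 - 2 * x := by linarith
    have h2' : (0:ℝ) < 1 - x := by linarith
    positivity

lemma fMP_small {x : ℝ} (hx0 : 0 < x) (hx : x < 0.17) : fMP x < 0 := by
  have h1x : (0:ℝ) < 1 - x := by norm_num; linarith
  have h2x : (0:ℝ) < 1 - 2 * x := by norm_num; linarith
  have hq : (0:ℝ) < x / (1 - x) := div_pos hx0 h1x
  have l1 : Real.log (x / (1 - x)) ≤ x / (1 - x) - 1 := Real.log_le_sub_one_of_pos hq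
  have hr : (0:ℝ) < (1 - x) ^ 2 / (1 - 2 * x) := by positivity
  have l2 : Real.log ((1 - x) ^ 2 / (1 - 2 * x)) ≤ (1 - x) ^ 2 / (1 - 2 * x) - 1 :=
    Real.log_le_sub_one_of_pos hr
  have hlog : 2 * Real.log (1 - x) - Real.log (1 - 2 * x)
      = Real.log ((1 - x) ^ 2 / (1 - 2 * x)) := by
    rw [Real.log_div (by positivity) (ne_of_gt h2x), Real.log_pow]
    push_cast
    ring
  unfold fMP
  rw [hlog]
  have key : x * Real.log (x / (1 - x)) ≤ x * (x / (1 - x) - 1) :=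
    mul_le_mul_of_nonneg_left l1 (le_of_lt hx0)
  have h3 : x * (x / (1 - x) - 1) + ((1 - x) ^ 2 / (1 - 2 * x) - 1) < 0 := by
    rw [div_sub_one (ne_of_gt h1x), div_sub_one (ne_of_gt h2x)]
    have e1 : x * ((x - (1 - x)) / (1 - x)) < x * (-0.6) := by
      apply mul_lt_mul_of_pos_left _ hx0
      rw [div_lt_iff₀ h1x]
      nlinarith
    have e2 : ((1 - x) ^ 2 - (1 - 2 * x)) / (1 - 2 * x) < 0.6 * x := by
      rw [div_lt_iff₀ h2x]
      nlinarith
    nlinarith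
  linarith

lemma fMP_lt_at31 : fMP 0.31 < 0 := by
  have h : fMP 0.31 = (31:ℝ)/100 * Real.log (31/69)
      + (2 * Real.log (69/100) - Real.log (38/100)) := by
    unfold fMP; norm_num
  rw [h]
  have l1 : Real.log (((31:ℝ)/69)^(31:ℕ) * ((69:ℝ)/100)^(200:ℕ))
      < Real.log (((38:ℝ)/100)^(100:ℕ)) := by
    apply Real.log_lt_log (by positivity)
    rw [div_pow, div_pow, div_pow, div_mul_div_comm, div_lt_div_iff₀ (by positivity) (by positivity)]
    norm_num
  rw [Real.log_mul (by positivity) (by positivity), Real.log_pow, Real.log_pow,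
    Real.log_pow] at l1
  push_cast at l1
  linarith

lemma fMP_gt_at32 : 0 < fMP 0.32 := by
  have h : fMP 0.32 = (32:ℝ)/100 * Real.log (32/68)
      + (2 * Real.log (68/100) - Real.log (36/100)) := by
    unfold fMP; norm_num
  rw [h]
  have l1 : Real.log (((36:ℝ)/100)^(100:ℕ))
      < Real.log (((32:ℝ)/68)^(32:ℕ) * ((68:ℝ)/100)^(200:ℕ)) := by
    apply Real.log_lt_log (by positivity)
    rw [div_pow, div_pow, div_pow, div_mul_div_comm, div_lt_div_iff₀ (by positivity) (by positivity)]
    norm_num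
  rw [Real.log_mul (by positivity) (by positivity), Real.log_pow, Real.log_pow,
    Real.log_pow] at l1
  push_cast at l1
  linarith

lemma g_eq_exp_fMP {x : ℝ} (hx : x ∈ Ioo (0:ℝ) (1/2)) :
    (x / (1 - x)) ^ x * ((1 - x)^2 / (1 - 2*x)) = Real.exp (fMP x) := by
  obtain ⟨hx0, hx2⟩ := hx
  have h1x : (0:ℝ) < 1 - x := by linarith
  have h2x : (0:ℝ) < 1 - 2 * x := by linarith
  have hq : (0:ℝ) < x / (1 - x) := div_pos hx0 h1x
  have hr : (0:ℝ) < (1 - x) ^ 2 / (1 - 2 * x) := by positivity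
  rw [Real.rpow_def_of_pos hq, ← Real.exp_log hr, ← Real.exp_add]
  congr 1
  unfold fMP
  rw [Real.log_div (by positivity) (ne_of_gt h2x), Real.log_pow]
  push_cast
  ring

lemma fMP_combination {a m b : ℝ} (ha : a ∈ Ioo (0:ℝ) (1/2)) (hb : b ∈ Ioo (0:ℝ) (1/2))
    (h1 : a < m) (h2 : m < b) :
    fMP m ≤ ((b - m)/(b - a)) * fMP a + ((m - a)/(b - a)) * fMP b := by
  have hab : (0:ℝ) < b - a := by linarith
  have hl1 : (0:ℝ) ≤ (b - m)/(b - a) := div_nonneg (by linarith) (by linarith)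
  have hl2 : (0:ℝ) ≤ (m - a)/(b - a) := div_nonneg (by linarith) (by linarith)
  have hsum : (b - m)/(b - a) + (m - a)/(b - a) = 1 := by
    field_simp
    ring
  have h := convexOn_fMP.2 ha hb hl1 hl2 hsum
  simp only [smul_eq_mul] at h
  have hm : (b - m)/(b - a) * a + (m - a)/(b - a) * b = m := by
    rw [div_mul_eq_mul_div, div_mul_eq_mul_div, ← add_div,
      div_eq_iff (ne_of_gt hab)]
    ring
  rw [hm] at h
  exact h

theorem stmt_19 :
    ∃! b : ℝ, b ∈ Set.Ioo (0:ℝ) (1/2) ∧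
      (∀ β ∈ Set.Ioo (0:ℝ) b,
        (β / (1 - β)) ^ β * ((1 - β)^2 / (1 - 2*β)) < 1) ∧
      (∀ β ∈ Set.Ioo b (1/2 : ℝ),
        ¬ ((β / (1 - β)) ^ β * ((1 - β)^2 / (1 - 2*β)) < 1)) ∧
      b ∈ Set.Ioo (0.31 : ℝ) 0.32 := by
  -- find the root by IVT
  have hsub : Icc (0.31:ℝ) 0.32 ⊆ Ioo (0:ℝ) (1/2) := by
    intro x hx; obtain ⟨h1, h2⟩ := hx; constructor <;> norm_num <;> linarith
  have hcont : ContinuousOn fMP (Icc (0.31:ℝ) 0.32) := contOn_fMP.mono hsub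
  have hivt := intermediate_value_Icc (by norm_num : (0.31:ℝ) ≤ 0.32) hcont
  have h0mem : (0:ℝ) ∈ Icc (fMP 0.31) (fMP 0.32) :=
    ⟨le_of_lt fMP_lt_at31, le_of_lt fMP_gt_at32⟩
  obtain ⟨b, hbmem, hfb⟩ := hivt h0mem
  have hbIoo : b ∈ Ioo (0.31:ℝ) 0.32 := by
    have h31 := fMP_lt_at31
    have h32 := fMP_gt_at32
    rcases eq_or_lt_of_le hbmem.1 with h | h
    · exfalso; rw [h, hfb] at h31; exact lt_irrefl 0 h31
    rcases eq_or_lt_of_le hbmem.2 with h' | h'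
    · exfalso; rw [← h', hfb] at h32; exact lt_irrefl 0 h32
    exact ⟨h, h'⟩
  have hbI : b ∈ Ioo (0:ℝ) (1/2) := hsub (Ioo_subset_Icc_self hbIoo)
  -- main properties
  have prop1 : ∀ β ∈ Set.Ioo (0:ℝ) b,
      (β / (1 - β)) ^ β * ((1 - β)^2 / (1 - 2*β)) < 1 := by
    intro β hβ
    obtain ⟨hβ0, hβb⟩ := hβ
    have hβI : β ∈ Ioo (0:ℝ) (1/2) := ⟨hβ0, lt_trans hβb hbI.2⟩
    rw [g_eq_exp_fMP hβI, Real.exp_lt_one_iff]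
    have haI : β/2 ∈ Ioo (0:ℝ) (1/2) := ⟨by linarith, by linarith [hβI.2]⟩
    have hfa : fMP (β/2) < 0 := fMP_small (by linarith) (by nlinarith [hbIoo.2])
    have hcomb := fMP_combination haI hbI (by linarith : β/2 < β) hβb
    rw [hfb] at hcomb
    have hl1 : (0:ℝ) < (b - β)/(b - β/2) := by
      apply div_pos <;> linarith
    nlinarith
  have prop2 : ∀ β ∈ Set.Ioo b (1/2:ℝ),
      ¬ ((β / (1 - β)) ^ β * ((1 - β)^2 / (1 - 2*β)) < 1) := by
    intro β hβ
    obtain ⟨hβb, hβ2⟩ := hβ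
    have hβI : β ∈ Ioo (0:ℝ) (1/2) := ⟨lt_trans hbI.1 hβb, hβ2⟩
    rw [g_eq_exp_fMP hβI, Real.exp_lt_one_iff, not_lt]
    have haI : (0.1:ℝ) ∈ Ioo (0:ℝ) (1/2) := by norm_num
    have hfa : fMP 0.1 < 0 := fMP_small (by norm_num) (by norm_num)
    have h01b : (0.1:ℝ) < b := by linarith [hbIoo.1]
    have hcomb := fMP_combination haI hβI h01b hβb
    rw [hfb] at hcomb
    have hl1 : (0:ℝ) < (β - b)/(β - 0.1) := by
      apply div_pos <;> linarith
    have hl2 : (0:ℝ) < (b - 0.1)/(β - 0.1) := by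
      apply div_pos <;> linarith
    nlinarith
  refine ⟨b, ⟨hbI, prop1, prop2, hbIoo⟩, ?_⟩
  -- uniqueness
  rintro y ⟨hyI, hy1, hy2, hyIoo⟩
  by_contra hne
  rcases lt_or_gt_of_ne hne with h | h
  · -- y < b
    set m := (y + b)/2 with hm
    have hm1 : y < m := by rw [hm]; linarith
    have hm2 : m < b := by rw [hm]; linarith
    have hA := prop1 m ⟨by linarith [hyI.1], hm2⟩
    have hB := hy2 m ⟨hm1, by linarith [hbI.2]⟩
    exact hB hA
  · -- b < y
    set m := (b + y)/2 with hm
    have hm1 : b < m := by rw [hm]; linarith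
    have hm2 : m < y := by rw [hm]; linarith
    have hA := hy1 m ⟨by linarith [hbI.1], hm2⟩
    have hB := prop2 m ⟨hm1, by linarith [hyI.2]⟩
    exact hB hA
end
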